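/- arXiv:2302.01824 — 17 statements merged into one kernel-verified Lean document; each statement's English description precedes it below -/
import Mathlib

section
/- Let F be a field and let M be an invertible r×r diagonal matrix over F which is almost cyclic. Suppose that M is conjugate in GL_r(F) to the inverse of its transpose. Then every eigenvalue e of M with e ≠ 1 and e ≠ −1 has multiplicity 1, i.e. occurs exactly once among the diagonal entries of M. -/
open Matrix Polynomial

/-- A family of elements of `F` is almost cyclic if at most one value
occurs with multiplicity greater than one. -/
def AlmostCyclic {I F : Type*} (e : I → F) : Prop :=
  ∀ i j k l : I, i ≠ j → e i = e j → k ≠ l → e k = e l → e i = e k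

private lemma charpoly_conj_aux {F : Type*} [Field F] [DecidableEq F] {r : ℕ}
    (A B : Matrix (Fin r) (Fin r) F) (h : IsConj A B) : A.charpoly = B.charpoly := by
  obtain ⟨c, hc⟩ := h
  have hB : B = (c : Matrix (Fin r) (Fin r) F) * A * (↑c⁻¹ : Matrix (Fin r) (Fin r) F) :=
    ((Units.eq_mul_inv_iff_mul_eq c).mpr hc.eq.symm)
  subst hB
  set P : Matrix (Fin r) (Fin r) F := (c : Matrix (Fin r) (Fin r) F) with hP
  set Q : Matrix (Fin r) (Fin r) F := (↑c⁻¹ : Matrix (Fin r) (Fin r) F) with hQ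
  have hPQ : P * Q = 1 := Units.mul_inv c
  have hQP : Q * P = 1 := Units.inv_mul c
  have hmap : ∀ M N : Matrix (Fin r) (Fin r) F,
      (M * N).map (C : F →+* F[X]) = M.map C * N.map C := fun M N => by
    simp [Matrix.map_mul]
  have hcc : P.map C * Q.map C = 1 := by
    rw [← hmap, hPQ]; simp
  have hcc' : Q.map C * P.map C = 1 := by
    rw [← hmap, hQP]; simp
  have key : charmatrix (P * A * Q) = P.map C * charmatrix A * Q.map C := by
    unfold charmatrix
    simp only [RingHom.mapMatrix_apply]
    rw [hmap, hmap, Matrix.mul_sub, Matrix.sub_mul]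
    congr 1
    have hsc : P.map C * Matrix.scalar (Fin r) X = Matrix.scalar (Fin r) X * P.map C :=
      (Matrix.scalar_commute X (fun s => Commute.all X s) (P.map C)).symm
    rw [hsc, Matrix.mul_assoc, hcc, Matrix.mul_one]
  rw [Matrix.charpoly, Matrix.charpoly, key, det_mul, det_mul]
  rw [mul_comm (P.map C).det _, mul_assoc, ← det_mul, hcc]
  simp

/-- Let `M` be an invertible `r × r` diagonal matrix over a field `F` which is almost
cyclic, and suppose `M` is conjugate in `GL_r(F)` to the inverse of its transpose.
Then every eigenvalue `e ≠ ±1` of `M` has multiplicity `1`. -/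
theorem stmt0 {F : Type*} [Field F] [DecidableEq F] {r : ℕ} (d : Fin r → F)
    (hinv : ∀ i, d i ≠ 0)
    (hac : AlmostCyclic d)
    (hconj : IsConj (Matrix.diagonal d) (((Matrix.diagonal d)ᵀ)⁻¹))
    (e : F) (he1 : e ≠ 1) (hem1 : e ≠ -1) (hev : ∃ i, d i = e) :
    (Finset.univ.filter fun i => d i = e).card = 1 := by
  -- rewrite the transpose-inverse as a diagonal matrix
  have hdi : ((Matrix.diagonal d)ᵀ)⁻¹ = Matrix.diagonal (fun i => (d i)⁻¹) := by
    rw [Matrix.diagonal_transpose, Matrix.inv_diagonal]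
    have hri : Ring.inverse d = fun i => (d i)⁻¹ :=
      Ring.inverse_unit ⟨d, fun i => (d i)⁻¹, funext fun i => mul_inv_cancel₀ (hinv i),
        funext fun i => inv_mul_cancel₀ (hinv i)⟩
    rw [hri]
  rw [hdi] at hconj
  -- equal characteristic polynomials
  have hcp := charpoly_conj_aux _ _ hconj
  have hdiagcp : ∀ v : Fin r → F,
      (Matrix.diagonal v).charpoly = (Multiset.map (fun a => X - C a) (Multiset.map v Finset.univ.val)).prod := by
    intro v
    rw [Matrix.charpoly]
    have : charmatrix (Matrix.diagonal v) = Matrix.diagonal (fun i => X - C (v i)) := by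
      ext i j
      by_cases h : i = j
      · subst h; simp [charmatrix_apply_eq]
      · simp [charmatrix_apply_ne _ _ _ h, Matrix.diagonal_apply_ne _ h]
    rw [this, det_diagonal, Multiset.map_map]
    simp [Finset.prod]
  rw [hdiagcp, hdiagcp] at hcp
  -- multisets of eigenvalues coincide
  have hms : Multiset.map d Finset.univ.val
      = Multiset.map (fun i => (d i)⁻¹) Finset.univ.val := by
    have := congrArg Polynomial.roots hcp
    rwa [Polynomial.roots_multiset_prod_X_sub_C, Polynomial.roots_multiset_prod_X_sub_C] at this
  -- count e on both sides
  have hcount : ∀ (b : F), Multiset.count b (Multiset.map d Finset.univ.val)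
      = (Finset.univ.filter fun i => d i = b).card := by
    intro b
    have h1 : (Finset.univ.filter fun i => d i = b).card
        = Multiset.card (Multiset.filter (fun i => d i = b) Finset.univ.val) := rfl
    rw [h1, Multiset.count_map]
    exact congrArg Multiset.card (Multiset.filter_congr (fun x _ => eq_comm))
  have hcount2 : Multiset.count e (Multiset.map (fun i => (d i)⁻¹) Finset.univ.val)
      = (Finset.univ.filter fun i => d i = e⁻¹).card := by
    have h1 : (Finset.univ.filter fun i => d i = e⁻¹).card
        = Multiset.card (Multiset.filter (fun i => d i = e⁻¹) Finset.univ.val) := rfl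
    rw [h1, Multiset.count_map]
    exact congrArg Multiset.card (Multiset.filter_congr
      (fun x _ => ⟨fun h => by rw [h, inv_inv], fun h => by rw [h, inv_inv]⟩))
  have hkey : (Finset.univ.filter fun i => d i = e).card
      = (Finset.univ.filter fun i => d i = e⁻¹).card := by
    rw [← hcount, ← hcount2, hms]
  -- positivity
  obtain ⟨i0, hi0⟩ := hev
  have hpos : 0 < (Finset.univ.filter fun i => d i = e).card :=
    Finset.card_pos.mpr ⟨i0, by simp [hi0]⟩
  -- suppose ≥ 2, derive contradiction
  by_contra hne
  have h2 : 2 ≤ (Finset.univ.filter fun i => d i = e).card := by omega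
  obtain ⟨i, hi, j, hj, hij⟩ := Finset.one_lt_card.mp h2
  have h2' : 2 ≤ (Finset.univ.filter fun i => d i = e⁻¹).card := hkey ▸ h2
  obtain ⟨k, hk, l, hl, hkl⟩ := Finset.one_lt_card.mp h2'
  simp only [Finset.mem_filter] at hi hj hk hl
  have : d i = d k := hac i j k l hij (hi.2.trans hj.2.symm) hkl (hk.2.trans hl.2.symm)
  rw [hi.2, hk.2] at this
  have he0 : e ≠ 0 := by intro h; exact hinv i0 (hi0.trans h)
  have hsq : e * e = 1 := by
    field_simp at this
    linear_combination this
  rcases mul_self_eq_one_iff.mp hsq with h | h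
  · exact he1 h
  · exact hem1 h
end

section
/- Let F be a field and let M₁, M₂ be invertible diagonal matrices over F, each non-scalar. If the Kronecker product M₁ ⊗ M₂ is almost cyclic, then both M₁ and M₂ are cyclic. -/
/-- If `M₁`, `M₂` are invertible non-scalar diagonal matrices over a field `F`
(given by their diagonal entries `d₁`, `d₂`) and the Kronecker product `M₁ ⊗ M₂`
is almost cyclic, then both `M₁` and `M₂` are cyclic (pairwise distinct entries). -/
theorem stmt1 {F : Type*} [Field F] {m n : ℕ}
    (d₁ : Fin m → F) (d₂ : Fin n → F)
    (h₁0 : ∀ i, d₁ i ≠ 0) (h₂0 : ∀ j, d₂ j ≠ 0)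
    (hns₁ : ∃ i j, d₁ i ≠ d₁ j) (hns₂ : ∃ i j, d₂ i ≠ d₂ j)
    (hac : AlmostCyclic (fun p : Fin m × Fin n => d₁ p.1 * d₂ p.2)) :
    Function.Injective d₁ ∧ Function.Injective d₂ := by
  constructor
  · intro i j hij
    by_contra hne
    obtain ⟨k, l, hkl⟩ := hns₂
    have h := hac (i, k) (j, k) (i, l) (j, l)
      (by simp [Prod.ext_iff, hne]) (by simp [hij])
      (by simp [Prod.ext_iff, hne]) (by simp [hij])
    exact hkl (mul_left_cancel₀ (h₁0 i) h)
  · intro k l hkl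
    by_contra hne
    obtain ⟨i, j, hij⟩ := hns₁
    have h := hac (i, k) (i, l) (j, k) (j, l)
      (by simp [Prod.ext_iff, hne]) (by simp [hkl])
      (by simp [Prod.ext_iff, hne]) (by simp [hkl])
    exact hij (mul_right_cancel₀ (h₂0 k) h)
end

section
/- Let F be a field and let M₁, M₂ be invertible diagonal non-scalar matrices over F such that M₁ is conjugate to M₁⁻¹ and M₂ is conjugate to M₂⁻¹ (conjugacy in the general linear group of the appropriate size over F). If M = M₁ ⊗ M₂ (Kronecker product) is almost cyclic, then every value occurs at most twice among the diagonal entries of M; moreover, if a value e occurs exactly twice then e = 1 or e = −1. -/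
open Matrix

lemma exists_inv_mem {F : Type*} [Field F] [DecidableEq F] {m : ℕ} (d : Fin m → F)
    (h0 : ∀ i, d i ≠ 0)
    (hc : IsConj (Matrix.diagonal d) ((Matrix.diagonal d)⁻¹)) (i : Fin m) :
    ∃ i', d i' = (d i)⁻¹ := by
  obtain ⟨u, hu⟩ := hc
  have hsemi : (u : Matrix (Fin m) (Fin m) F) * Matrix.diagonal d
      = (Matrix.diagonal d)⁻¹ * u := hu
  set x := (d i)⁻¹ with hx
  have hkey : (u : Matrix (Fin m) (Fin m) F) * (x • 1 - Matrix.diagonal d)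
      = (x • 1 - (Matrix.diagonal d)⁻¹) * u := by
    rw [mul_sub, sub_mul, hsemi]
    congr 1
    simp [Matrix.mul_smul, Matrix.smul_mul]
  have hdet : (x • (1 : Matrix (Fin m) (Fin m) F) - Matrix.diagonal d).det
      = (x • (1 : Matrix (Fin m) (Fin m) F) - (Matrix.diagonal d)⁻¹).det := by
    have h := congrArg Matrix.det hkey
    rw [Matrix.det_mul, Matrix.det_mul] at h
    have hu' : IsUnit (u : Matrix (Fin m) (Fin m) F).det :=
      (Matrix.isUnit_iff_isUnit_det _).mp u.isUnit
    rw [mul_comm] at h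
    exact mul_right_cancel₀ hu'.ne_zero h
  have hinv : (Matrix.diagonal d)⁻¹ = Matrix.diagonal (fun j => (d j)⁻¹) := by
    apply Matrix.inv_eq_right_inv
    rw [Matrix.diagonal_mul_diagonal]
    convert Matrix.diagonal_one using 2
    funext j
    exact mul_inv_cancel₀ (h0 j)
  have h1 : (x • (1 : Matrix (Fin m) (Fin m) F) - Matrix.diagonal d)
      = Matrix.diagonal (fun j => x - d j) := by
    rw [Matrix.smul_one_eq_diagonal, ← Matrix.diagonal_sub]
  have h2 : (x • (1 : Matrix (Fin m) (Fin m) F) - (Matrix.diagonal d)⁻¹)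
      = Matrix.diagonal (fun j => x - (d j)⁻¹) := by
    rw [hinv, Matrix.smul_one_eq_diagonal, ← Matrix.diagonal_sub]
  rw [h1, h2, Matrix.det_diagonal, Matrix.det_diagonal] at hdet
  have hz : ∏ j, (x - (d j)⁻¹) = 0 :=
    Finset.prod_eq_zero (Finset.mem_univ i) (by rw [hx, sub_self])
  rw [hz] at hdet
  obtain ⟨j, _, hj⟩ := Finset.prod_eq_zero_iff.mp hdet
  exact ⟨j, by linear_combination -hj⟩


/-- Let `M₁`, `M₂` be invertible non-scalar diagonal matrices over a field `F`,
each conjugate (in the matrix ring, i.e. in the general linear group) to its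
inverse.  If the Kronecker product `M = M₁ ⊗ M₂` is almost cyclic, then every
value occurs at most twice among the diagonal entries of `M`, and a value
occurring exactly twice must be `1` or `-1`. -/
theorem stmt2 {F : Type*} [Field F] [DecidableEq F] {m n : ℕ}
    (d₁ : Fin m → F) (d₂ : Fin n → F)
    (h₁0 : ∀ i, d₁ i ≠ 0) (h₂0 : ∀ j, d₂ j ≠ 0)
    (hns₁ : ∃ i j, d₁ i ≠ d₁ j) (hns₂ : ∃ i j, d₂ i ≠ d₂ j)
    (hconj₁ : IsConj (Matrix.diagonal d₁) ((Matrix.diagonal d₁)⁻¹))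
    (hconj₂ : IsConj (Matrix.diagonal d₂) ((Matrix.diagonal d₂)⁻¹))
    (hac : AlmostCyclic (fun p : Fin m × Fin n => d₁ p.1 * d₂ p.2)) :
    (∀ v : F, (Finset.univ.filter fun p : Fin m × Fin n => d₁ p.1 * d₂ p.2 = v).card ≤ 2) ∧
    (∀ e : F, (Finset.univ.filter fun p : Fin m × Fin n => d₁ p.1 * d₂ p.2 = e).card = 2 →
      e = 1 ∨ e = -1) := by
  classical
  -- injectivity of d₁, d₂
  have hinj₁ : Function.Injective d₁ := by
    intro i i' hii
    by_contra hne
    obtain ⟨j, j', hjj⟩ := hns₂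
    have h1 := hac (i, j) (i', j) (i, j') (i', j')
      (by simp [Prod.ext_iff, hne]) (by simp [hii])
      (by simp [Prod.ext_iff, hne]) (by simp [hii])
    simp only at h1
    exact hjj (mul_left_cancel₀ (h₁0 i) h1)
  have hinj₂ : Function.Injective d₂ := by
    intro j j' hjj
    by_contra hne
    obtain ⟨i, i', hii⟩ := hns₁
    have h1 := hac (i, j) (i, j') (i', j) (i', j')
      (by simp [Prod.ext_iff, hne]) (by simp [hjj])
      (by simp [Prod.ext_iff, hne]) (by simp [hjj])
    simp only at h1
    exact hii (mul_right_cancel₀ (h₂0 j) h1)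
  -- distinct positions with equal products have distinct rows and columns
  have key : ∀ p q : Fin m × Fin n, p ≠ q → d₁ p.1 * d₂ p.2 = d₁ q.1 * d₂ q.2 →
      p.1 ≠ q.1 ∧ p.2 ≠ q.2 := by
    intro p q hpq heq
    constructor
    · intro h
      rw [h] at heq
      exact hpq (Prod.ext h (hinj₂ (mul_left_cancel₀ (h₁0 q.1) heq)))
    · intro h
      rw [h] at heq
      exact hpq (Prod.ext (hinj₁ (mul_right_cancel₀ (h₂0 q.2) heq)) h)
  -- key cross-pair argument: repeated value v forces inverse relation on rows
  have cross : ∀ p q : Fin m × Fin n, ∀ v : F, p ≠ q →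
      d₁ p.1 * d₂ p.2 = v → d₁ q.1 * d₂ q.2 = v → (d₁ p.1)⁻¹ = d₁ q.1 := by
    intro p q v hpq hp hq
    have hrow : p.1 ≠ q.1 := (key p q hpq (hp.trans hq.symm)).1
    obtain ⟨sp, hsp⟩ := exists_inv_mem d₁ h₁0 hconj₁ p.1
    obtain ⟨sq, hsq⟩ := exists_inv_mem d₁ h₁0 hconj₁ q.1
    have hspq : sp ≠ sq := by
      intro h
      apply hrow
      apply hinj₁
      have := hsp.symm.trans (h ▸ hsq)
      exact inv_injective this
    have hvalA : d₁ sp * d₂ q.2 = (d₁ p.1)⁻¹ * d₂ q.2 := by rw [hsp]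
    have hvalB : d₁ sq * d₂ p.2 = (d₁ q.1)⁻¹ * d₂ p.2 := by rw [hsq]
    have hAB : d₁ sp * d₂ q.2 = d₁ sq * d₂ p.2 := by
      rw [hvalA, hvalB, inv_mul_eq_div, inv_mul_eq_div,
        div_eq_div_iff (h₁0 _) (h₁0 _)]
      linear_combination hq - hp
    have h1 := hac (sp, q.2) (sq, p.2) p q
      (by simp [Prod.ext_iff, hspq]) hAB hpq (hp.trans hq.symm)
    simp only at h1
    rw [hvalA, hp, ← hq] at h1
    exact mul_right_cancel₀ (h₂0 q.2) h1
  constructor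
  · -- multiplicity at most 2
    intro v
    by_contra hcard
    push_neg at hcard
    set s := Finset.univ.filter fun p : Fin m × Fin n => d₁ p.1 * d₂ p.2 = v with hs
    have h1 : 0 < s.card := by omega
    obtain ⟨p, hp⟩ := Finset.card_pos.mp h1
    have h2 : 0 < (s.erase p).card := by
      rw [Finset.card_erase_of_mem hp]; omega
    obtain ⟨q, hq⟩ := Finset.card_pos.mp h2
    have h3 : 0 < ((s.erase p).erase q).card := by
      rw [Finset.card_erase_of_mem hq, Finset.card_erase_of_mem hp]; omega
    obtain ⟨r, hr⟩ := Finset.card_pos.mp h3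
    obtain ⟨hrq, hr'⟩ := Finset.mem_erase.mp hr
    obtain ⟨hrp, hrs⟩ := Finset.mem_erase.mp hr'
    obtain ⟨hqp, hqs⟩ := Finset.mem_erase.mp hq
    have hpv : d₁ p.1 * d₂ p.2 = v := (Finset.mem_filter.mp hp).2
    have hqv : d₁ q.1 * d₂ q.2 = v := (Finset.mem_filter.mp hqs).2
    have hrv : d₁ r.1 * d₂ r.2 = v := (Finset.mem_filter.mp hrs).2
    have e1 : (d₁ p.1)⁻¹ = d₁ q.1 := cross p q v (Ne.symm hqp) hpv hqv
    have e2 : (d₁ p.1)⁻¹ = d₁ r.1 := cross p r v (Ne.symm hrp) hpv hrv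
    have : q.1 = r.1 := hinj₁ (e1.symm.trans e2)
    exact (key q r hrq.symm (hqv.trans hrv.symm)).1 this
  · -- multiplicity exactly 2 forces e = ±1
    intro e he
    obtain ⟨p, q, hpq, hset⟩ := Finset.card_eq_two.mp he
    have hp : p ∈ Finset.univ.filter fun x : Fin m × Fin n => d₁ x.1 * d₂ x.2 = e := by
      rw [hset]; simp
    have hq : q ∈ Finset.univ.filter fun x : Fin m × Fin n => d₁ x.1 * d₂ x.2 = e := by
      rw [hset]; simp
    have hpv : d₁ p.1 * d₂ p.2 = e := (Finset.mem_filter.mp hp).2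
    have hqv : d₁ q.1 * d₂ q.2 = e := (Finset.mem_filter.mp hq).2
    have he0 : e ≠ 0 := by
      rw [← hpv]; exact mul_ne_zero (h₁0 _) (h₂0 _)
    have hrow : p.1 ≠ q.1 := (key p q hpq (hpv.trans hqv.symm)).1
    obtain ⟨sp, hsp⟩ := exists_inv_mem d₁ h₁0 hconj₁ p.1
    obtain ⟨sq, hsq⟩ := exists_inv_mem d₁ h₁0 hconj₁ q.1
    obtain ⟨tp, htp⟩ := exists_inv_mem d₂ h₂0 hconj₂ p.2
    obtain ⟨tq, htq⟩ := exists_inv_mem d₂ h₂0 hconj₂ q.2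
    have hspq : sp ≠ sq := by
      intro h
      exact hrow (hinj₁ (inv_injective (hsp.symm.trans (h ▸ hsq))))
    have hvp : d₁ sp * d₂ tp = e⁻¹ := by
      rw [hsp, htp, ← mul_inv, hpv]
    have hvq : d₁ sq * d₂ tq = e⁻¹ := by
      rw [hsq, htq, ← mul_inv, hqv]
    have h1 := hac (sp, tp) (sq, tq) p q
      (by simp [Prod.ext_iff, hspq]) (by simpa using hvp.trans hvq.symm)
      hpq (hpv.trans hqv.symm)
    simp only at h1
    rw [hvp, hpv] at h1
    -- h1 : e⁻¹ = e
    have h2 : e * e = 1 := by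
      nth_rewrite 1 [← h1]
      exact inv_mul_cancel₀ he0
    exact mul_self_eq_one_iff.mp h2
end

section
/- Let F be a field, n ≥ 2 an integer, and a₁, …, aₙ nonzero elements of F with a₁a₂⋯aₙ = 1. Suppose that the elements a_i a_j⁻¹, indexed by ordered pairs (i,j) with i ≠ j, are pairwise distinct and all different from 1. Then the products a_i a_l, indexed by pairs (i,l) with 1 ≤ i < l ≤ n, are pairwise distinct. -/
/-- For `s = diag(a₁,…,aₙ) ∈ SL_n(F)` strictly regular (the root values
`a_i a_j⁻¹`, `i ≠ j`, are pairwise distinct and different from `1`),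
the eigenvalues `a_i a_l` (`i < l`) of `s` on the second exterior power
of the natural module are pairwise distinct. -/
theorem stmt3 {F : Type*} [Field F] {n : ℕ} (hn : 2 ≤ n)
    (a : Fin n → F) (ha0 : ∀ i, a i ≠ 0) (hprod : ∏ i, a i = 1)
    (hdist : ∀ i j k l : Fin n, i ≠ j → k ≠ l →
      a i * (a j)⁻¹ = a k * (a l)⁻¹ → i = k ∧ j = l)
    (hne1 : ∀ i j : Fin n, i ≠ j → a i * (a j)⁻¹ ≠ 1) :
    ∀ i l j k : Fin n, i < l → j < k → a i * a l = a j * a k → i = j ∧ l = k := by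
  intro i l j k hil hjk heq
  have hratio : a i * (a j)⁻¹ = a k * (a l)⁻¹ := by
    rw [mul_inv_eq_iff_eq_mul₀ (ha0 j),
      show a k * (a l)⁻¹ * a j = a k * a j * (a l)⁻¹ from by ring,
      eq_mul_inv_iff_mul_eq₀ (ha0 l)]
    linear_combination heq
  by_cases hij : i = j
  · refine ⟨hij, ?_⟩
    by_contra hlk
    apply hne1 l k hlk
    have : a l = a k := by
      have := heq
      rw [hij] at this
      exact mul_left_cancel₀ (ha0 j) this
    rw [this]
    field_simp [ha0 k]
  · by_cases hkl : k = l
    · exfalso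
      apply hne1 i j hij
      have : a i = a j := by
        rw [← hkl] at heq
        exact mul_right_cancel₀ (ha0 k) heq
      rw [this]
      field_simp [ha0 j]
    · obtain ⟨hik, hjl⟩ := hdist i j k l hij hkl hratio
      exfalso
      subst hik hjl
      exact absurd (hil.trans hjk) (lt_irrefl i)
end

section
/- Let F be a field, n ≥ 4 an integer, and a₁, …, aₙ pairwise distinct nonzero elements of F with a₁a₂⋯aₙ = 1. Consider the family consisting of the products a_i a_j for all 1 ≤ i < j ≤ n together with the products a_i⁻¹ a_j⁻¹ for all 1 ≤ i < j ≤ n (indexed by two disjoint copies of the set of pairs, so that each of the n(n−1) index pairs contributes one member). If this family is almost cyclic, then every value of F has multiplicity at most 2 in the family. -/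
namespace Stmt4Aux

variable {F : Type*} [Field F] {n : ℕ}

abbrev P (n : ℕ) := {p : Fin n × Fin n // p.1 < p.2}

lemma pair_exists (a : Fin n → F) {i k : Fin n} (h : i ≠ k) :
    ∃ r : P n, a r.1.1 * a r.1.2 = a i * a k := by
  rcases lt_or_gt_of_ne h with h' | h'
  · exact ⟨⟨(i, k), h'⟩, rfl⟩
  · exact ⟨⟨(k, i), h'⟩, mul_comm _ _⟩

lemma key (a : Fin n → F) (ha0 : ∀ i, a i ≠ 0) (hinj : Function.Injective a)
    (hac : AlmostCyclic (Sum.elim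
        (fun p : P n => a p.1.1 * a p.1.2)
        (fun p : P n => (a p.1.1)⁻¹ * (a p.1.2)⁻¹)))
    {v : F} (hv2 : v * v = 1) {p q : P n} (hpq : p ≠ q)
    (hp : a p.1.1 * a p.1.2 = v) (hq : a q.1.1 * a q.1.2 = v) : False := by
  obtain ⟨⟨i, j⟩, hij⟩ := p
  obtain ⟨⟨k, l⟩, hkl⟩ := q
  simp only at hp hq hij hkl
  have hik : i ≠ k := by
    intro h; subst h
    have := hinj (mul_left_cancel₀ (ha0 i) (hp.trans hq.symm))
    exact hpq (by simp [this])
  have hjl : j ≠ l := by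
    intro h; subst h
    have := hinj (mul_right_cancel₀ (ha0 j) (hp.trans hq.symm))
    exact hpq (by simp [this])
  obtain ⟨r, hr⟩ := pair_exists a hik
  obtain ⟨s, hs⟩ := pair_exists a hjl
  have hone : (a i * a k) * (a j * a l) = 1 := by
    rw [show (a i * a k) * (a j * a l) = (a i * a j) * (a k * a l) by ring, hp, hq, hv2]
  have hone' : (a j * a l) * (a i * a k) = 1 := by rw [mul_comm]; exact hone
  have h1 : v = a i * a k := by
    have := hac (Sum.inl ⟨(i, j), hij⟩) (Sum.inl ⟨(k, l), hkl⟩) (Sum.inl r) (Sum.inr s)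
      (by simpa using hpq) (by simpa using hp.trans hq.symm) (by simp)
      (by
        simp only [Sum.elim_inl, Sum.elim_inr]
        rw [hr, ← mul_inv, hs]
        exact eq_inv_of_mul_eq_one_left hone)
    simp only [Sum.elim_inl] at this
    rw [← hp, this]; exact hr
  have h2 : v = a j * a l := by
    have := hac (Sum.inl ⟨(i, j), hij⟩) (Sum.inl ⟨(k, l), hkl⟩) (Sum.inl s) (Sum.inr r)
      (by simpa using hpq) (by simpa using hp.trans hq.symm) (by simp)
      (by
        simp only [Sum.elim_inl, Sum.elim_inr]
        rw [hs, ← mul_inv, hr]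
        exact eq_inv_of_mul_eq_one_left hone')
    simp only [Sum.elim_inl] at this
    rw [← hp, this]; exact hs
  have hjk : j = k := hinj (mul_left_cancel₀ (ha0 i) (hp.trans h1))
  have hil : i = l := by
    have hh : a j * a i = a j * a l := by rw [mul_comm]; exact hp.trans h2
    exact hinj (mul_left_cancel₀ (ha0 j) hh)
  rw [← hjk] at hkl
  rw [← hil] at hkl
  exact absurd (hij.trans hkl) (lt_irrefl _)

lemma fromL (a : Fin n → F) (ha0 : ∀ i, a i ≠ 0) (hinj : Function.Injective a)
    (hac : AlmostCyclic (Sum.elim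
        (fun p : P n => a p.1.1 * a p.1.2)
        (fun p : P n => (a p.1.1)⁻¹ * (a p.1.2)⁻¹)))
    {v : F} {p q : P n} (hpq : p ≠ q)
    (hp : a p.1.1 * a p.1.2 = v) (hq : a q.1.1 * a q.1.2 = v) : False := by
  have hv0 : v ≠ 0 := hp ▸ mul_ne_zero (ha0 _) (ha0 _)
  have this1 := hac (Sum.inl p) (Sum.inl q) (Sum.inr p) (Sum.inr q)
    (by simpa using hpq) (by simp only [Sum.elim_inl]; rw [hp, hq])
    (by simpa using hpq)
    (by simp only [Sum.elim_inr]; rw [← mul_inv, ← mul_inv, hp, hq])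
  simp only [Sum.elim_inl, Sum.elim_inr] at this1
  have hvinv : v = v⁻¹ := by
    calc v = a p.1.1 * a p.1.2 := hp.symm
      _ = (a p.1.1)⁻¹ * (a p.1.2)⁻¹ := this1
      _ = (a p.1.1 * a p.1.2)⁻¹ := (mul_inv _ _).symm
      _ = v⁻¹ := by rw [hp]
  have hv2 : v * v = 1 := by
    nth_rewrite 2 [hvinv]
    exact mul_inv_cancel₀ hv0
  exact key a ha0 hinj hac hv2 hpq hp hq

end Stmt4Aux

/-- The eigenvalue family of a regular element `diag(a₁,…,aₙ) ∈ SL_n(F)` on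
`V_{ω₂} ⊕ V_{ω_{n-2}}`: the products `a_i a_j` (`i < j`) together with the
products `a_i⁻¹ a_j⁻¹` (`i < j`), indexed by two disjoint copies of the set of
pairs.  If this family is almost cyclic, then every value of `F` has
multiplicity at most `2` in the family. -/
theorem stmt4 {F : Type*} [Field F] [DecidableEq F] {n : ℕ} (hn : 4 ≤ n)
    (a : Fin n → F) (ha0 : ∀ i, a i ≠ 0) (hinj : Function.Injective a)
    (hprod : ∏ i, a i = 1)
    (hac : AlmostCyclic
      (Sum.elim
        (fun p : {p : Fin n × Fin n // p.1 < p.2} => a p.1.1 * a p.1.2)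
        (fun p : {p : Fin n × Fin n // p.1 < p.2} => (a p.1.1)⁻¹ * (a p.1.2)⁻¹))) :
    ∀ v : F,
      (Finset.univ.filter
        fun t : {p : Fin n × Fin n // p.1 < p.2} ⊕ {p : Fin n × Fin n // p.1 < p.2} =>
          Sum.elim
            (fun p : {p : Fin n × Fin n // p.1 < p.2} => a p.1.1 * a p.1.2)
            (fun p : {p : Fin n × Fin n // p.1 < p.2} => (a p.1.1)⁻¹ * (a p.1.2)⁻¹) t
            = v).card ≤ 2 := by
  classical
  intro v
  by_contra hcard
  push_neg at hcard
  rw [Finset.two_lt_card_iff] at hcard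
  obtain ⟨t1, t2, t3, h1, h2, h3, h12, h13, h23⟩ := hcard
  rw [Finset.mem_filter] at h1 h2 h3
  replace h1 := h1.2; replace h2 := h2.2; replace h3 := h3.2
  have mainL : ∀ (p q : Stmt4Aux.P n), p ≠ q →
      a p.1.1 * a p.1.2 = v → a q.1.1 * a q.1.2 = v → False :=
    fun p q hpq hp hq => Stmt4Aux.fromL a ha0 hinj hac hpq hp hq
  have mainR : ∀ (p q : Stmt4Aux.P n), p ≠ q →
      (a p.1.1)⁻¹ * (a p.1.2)⁻¹ = v → (a q.1.1)⁻¹ * (a q.1.2)⁻¹ = v → False := by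
    intro p q hpq hp hq
    refine Stmt4Aux.fromL a ha0 hinj hac hpq (v := v⁻¹) ?_ ?_
    · rw [← hp, mul_inv, inv_inv, inv_inv]
    · rw [← hq, mul_inv, inv_inv, inv_inv]
  rcases t1 with p1 | p1 <;> rcases t2 with p2 | p2 <;> rcases t3 with p3 | p3 <;>
    simp only [Sum.elim_inl, Sum.elim_inr] at h1 h2 h3
  · exact mainL p1 p2 (by simpa using h12) h1 h2
  · exact mainL p1 p2 (by simpa using h12) h1 h2
  · exact mainL p1 p3 (by simpa using h13) h1 h3
  · exact mainR p2 p3 (by simpa using h23) h2 h3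
  · exact mainL p2 p3 (by simpa using h23) h2 h3
  · exact mainR p1 p3 (by simpa using h13) h1 h3
  · exact mainR p1 p2 (by simpa using h12) h1 h2
  · exact mainR p1 p2 (by simpa using h12) h1 h2
end

section
/- Let F be a field, n > 2 an integer, and a₁, …, a_{n+1} pairwise distinct nonzero elements of F. Let i be an integer with 2 ≤ i and 2i ≤ n + 1. For a subset S of {1, …, n+1} write π(S) = ∏_{t∈S} a_t. If the family (π(S)), indexed by all i-element subsets S of {1,…,n+1}, is almost cyclic, then for every integer j with 1 ≤ j < i the products π(S′), indexed by the j-element subsets S′ of {1,…,n+1}, are pairwise distinct. -/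
open Finset

theorem prod_mul_prod_eq_of_almostCyclic {ι M : Type*} [DecidableEq ι] [CommMonoid M]
    {a : ι → M} {i : ℕ}
    (hac : AlmostCyclic (fun S : {S : Finset ι // S.card = i} => ∏ t ∈ S.1, a t))
    {S T U U' : Finset ι} (hST : S ≠ T) (hprod : ∏ t ∈ S, a t = ∏ t ∈ T, a t)
    (hU : Disjoint (S ∪ T) U) (hU' : Disjoint (S ∪ T) U')
    (hcard : #S + #U = i) (hTS : #T = #S) (hUU' : #U' = #U) :
    (∏ t ∈ S, a t) * ∏ t ∈ U, a t = (∏ t ∈ S, a t) * ∏ t ∈ U', a t := by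
  rw [disjoint_union_left] at hU hU'
  have union_ne : ∀ V, Disjoint S V → Disjoint T V → S ∪ V ≠ T ∪ V := fun V hSV hTV h =>
    hST <| by rw [← union_sdiff_cancel_right hSV, h, union_sdiff_cancel_right hTV]
  have h := hac ⟨S ∪ U, by rw [card_union_of_disjoint hU.1]; omega⟩
    ⟨T ∪ U, by rw [card_union_of_disjoint hU.2]; omega⟩
    ⟨S ∪ U', by rw [card_union_of_disjoint hU'.1]; omega⟩
    ⟨T ∪ U', by rw [card_union_of_disjoint hU'.2]; omega⟩
    (fun h => union_ne U hU.1 hU.2 (congrArg Subtype.val h))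
    (by simp only [prod_union hU.1, prod_union hU.2, hprod])
    (fun h => union_ne U' hU'.1 hU'.2 (congrArg Subtype.val h))
    (by simp only [prod_union hU'.1, prod_union hU'.2, hprod])
  simpa only [prod_union hU.1, prod_union hU'.1] using h

theorem exists_subsets_card_eq_prod_ne {ι M : Type*} [DecidableEq ι] [CommGroupWithZero M]
    {a : ι → M} {C : Finset ι} {k : ℕ} (hk : 0 < k) (hkC : k < #C)
    (ha0 : ∀ t ∈ C, a t ≠ 0) (hinj : Set.InjOn a C) :
    ∃ U ⊆ C, ∃ U' ⊆ C, #U = k ∧ #U' = k ∧ ∏ t ∈ U, a t ≠ ∏ t ∈ U', a t := by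
  obtain ⟨U, hUC, hU⟩ := exists_subset_card_eq hkC.le
  obtain ⟨u, hu⟩ : U.Nonempty := card_pos.mp (by omega)
  obtain ⟨u', hu'⟩ : (C \ U).Nonempty := card_pos.mp (by rw [card_sdiff_of_subset hUC]; omega)
  rw [mem_sdiff] at hu'
  have hu'e : u' ∉ U.erase u := fun h => hu'.2 (mem_of_mem_erase h)
  refine ⟨U, hUC, insert u' (U.erase u), ?_, hU, ?_, ?_⟩
  · exact insert_subset hu'.1 ((erase_subset u U).trans hUC)
  · rw [card_insert_of_notMem hu'e, card_erase_of_mem hu]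
    omega
  · intro h
    rw [prod_insert hu'e, ← mul_prod_erase U a hu] at h
    have hrest : ∏ t ∈ U.erase u, a t ≠ 0 :=
      prod_ne_zero_iff.mpr fun t ht => ha0 t (hUC (mem_of_mem_erase ht))
    exact hu'.2 (hinj (hUC hu) hu'.1 (mul_right_cancel₀ hrest h) ▸ hu)

theorem stmt5_general {F : Type*} [Field F] {n : ℕ}
    (a : Fin (n + 1) → F) (ha0 : ∀ t, a t ≠ 0) (hinj : Function.Injective a)
    (i : ℕ) (hi : 2 * i ≤ n + 1)
    (hac : AlmostCyclic
      (fun S : {S : Finset (Fin (n + 1)) // S.card = i} => ∏ t ∈ S.1, a t)) :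
    ∀ j : ℕ, 1 ≤ j → j < i → ∀ S T : Finset (Fin (n + 1)),
      S.card = j → T.card = j → (∏ t ∈ S, a t) = (∏ t ∈ T, a t) → S = T := by
  intro j _ hji S T hS hT hprod
  by_contra hST
  have hC : i - j < #(S ∪ T)ᶜ := by
    rw [card_compl, Fintype.card_fin]
    have := card_union_le S T
    omega
  obtain ⟨U, hUC, U', hU'C, hU, hU', hne⟩ :=
    exists_subsets_card_eq_prod_ne (a := a) (by omega) hC (fun t _ => ha0 t) hinj.injOn
  have hS0 : ∏ t ∈ S, a t ≠ 0 := prod_ne_zero_iff.mpr fun t _ => ha0 t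
  refine hne (mul_left_cancel₀ hS0 ?_)
  exact prod_mul_prod_eq_of_almostCyclic hac hST hprod (subset_compl_iff_disjoint_left.mp hUC)
    (subset_compl_iff_disjoint_left.mp hU'C) (by omega) (by omega) (by omega)

/-- Let `a₁,…,a_{n+1}` be pairwise distinct nonzero elements of a field `F`
(`n > 2`), and `2 ≤ i` with `2i ≤ n+1`.  If the family of products
`π(S) = ∏_{t ∈ S} a_t` over the `i`-element subsets `S` of `{1,…,n+1}` is
almost cyclic, then for every `1 ≤ j < i` the products over `j`-element
subsets are pairwise distinct. -/
theorem stmt5 {F : Type*} [Field F] {n : ℕ} (hn : 2 < n)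
    (a : Fin (n + 1) → F) (ha0 : ∀ t, a t ≠ 0) (hinj : Function.Injective a)
    (i : ℕ) (hi2 : 2 ≤ i) (hi : 2 * i ≤ n + 1)
    (hac : AlmostCyclic
      (fun S : {S : Finset (Fin (n + 1)) // S.card = i} => ∏ t ∈ S.1, a t)) :
    ∀ j : ℕ, 1 ≤ j → j < i → ∀ S T : Finset (Fin (n + 1)),
      S.card = j → T.card = j → (∏ t ∈ S, a t) = (∏ t ∈ T, a t) → S = T :=
  stmt5_general a ha0 hinj i hi hac
end

section
/- Let F be a field, n ≥ 1 an integer, and a₁, …, a_{n+1} pairwise distinct nonzero elements of F. Let i and k be positive integers with 2i ≤ n + 1 and n + 1 < (k+1)·i. For an i-element subset S of {1, …, n+1} write π(S) = ∏_{t∈S} a_t. If the family (π(S)), indexed by all i-element subsets S, is almost cyclic, then every value of F is attained by at most k of these subsets, i.e. every value has multiplicity at most k in the family. -/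
/-- Let `a₁,…,a_{n+1}` be pairwise distinct nonzero elements of a field `F`
(`n ≥ 1`), and let `i, k` be positive integers with `2i ≤ n+1` and
`n+1 < (k+1)i`.  If the family of products `π(S) = ∏_{t ∈ S} a_t` over the
`i`-element subsets `S` of `{1,…,n+1}` is almost cyclic, then every value of
`F` has multiplicity at most `k` in the family. -/
theorem stmt6 {F : Type*} [Field F] [DecidableEq F] {n : ℕ} (hn : 1 ≤ n)
    (a : Fin (n + 1) → F) (ha0 : ∀ t, a t ≠ 0) (hinj : Function.Injective a)
    (i k : ℕ) (hi0 : 0 < i) (hk0 : 0 < k) (h2i : 2 * i ≤ n + 1)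
    (hki : n + 1 < (k + 1) * i)
    (hac : AlmostCyclic
      (fun S : {S : Finset (Fin (n + 1)) // S.card = i} => ∏ t ∈ S.1, a t)) :
    ∀ v : F,
      (Finset.univ.filter
        fun S : {S : Finset (Fin (n + 1)) // S.card = i} =>
          (∏ t ∈ S.1, a t) = v).card ≤ k := by
  intro v
  by_contra hlt
  push_neg at hlt
  set Φ := (Finset.univ.filter
        fun S : {S : Finset (Fin (n + 1)) // S.card = i} =>
          (∏ t ∈ S.1, a t) = v) with hΦ
  have hΦmem : ∀ S ∈ Φ, (∏ t ∈ (S : {S : Finset (Fin (n + 1)) // S.card = i}).1, a t) = v := by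
    intro S hS
    exact (Finset.mem_filter.mp hS).2
  -- find two distinct intersecting members
  obtain ⟨S, hS, T, hT, hST, x, hxS, hxT⟩ :
      ∃ S ∈ Φ, ∃ T ∈ Φ, S ≠ T ∧ ∃ x, x ∈ S.1 ∧ x ∈ T.1 := by
    by_contra hcon
    push_neg at hcon
    have hdisj : ∀ S ∈ Φ, ∀ T ∈ Φ, S ≠ T →
        Disjoint S.1 T.1 := by
      intro S hS T hT hne
      rw [Finset.disjoint_left]
      intro x hxS hxT
      exact hcon S hS T hT hne x hxS hxT
    have hcard := Finset.card_biUnion hdisj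
    have h1 : (Φ.biUnion fun S => S.1).card ≤ n + 1 := by
      have := Finset.card_le_univ (Φ.biUnion fun S => S.1)
      simpa using this
    have h2 : ∑ S ∈ Φ, S.1.card = Φ.card * i := by
      rw [Finset.sum_congr rfl (fun S _ => S.2), Finset.sum_const, smul_eq_mul]
    have h3 : (k + 1) * i ≤ Φ.card * i :=
      Nat.mul_le_mul_right i hlt
    have h4 : (Φ.biUnion fun S => S.1).card = Φ.card * i := hcard.trans h2
    omega
  -- x is in both S and T; find y outside S ∪ T
  have hcardU : (S.1 ∪ T.1).card < n + 1 := by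
    have h4 := Finset.card_union_add_card_inter S.1 T.1
    have h5 : 1 ≤ (S.1 ∩ T.1).card :=
      Finset.card_pos.mpr ⟨x, Finset.mem_inter.mpr ⟨hxS, hxT⟩⟩
    have := S.2; have := T.2
    omega
  obtain ⟨y, hy⟩ : ∃ y, y ∉ S.1 ∪ T.1 := by
    by_contra hcon
    push_neg at hcon
    have : (S.1 ∪ T.1) = Finset.univ := Finset.eq_univ_iff_forall.mpr hcon
    rw [this] at hcardU
    simp at hcardU
  have hyS : y ∉ S.1 := fun h => hy (Finset.mem_union_left _ h)
  have hyT : y ∉ T.1 := fun h => hy (Finset.mem_union_right _ h)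
  -- products over erased sets
  set PS := ∏ t ∈ S.1.erase x, a t with hPS
  set PT := ∏ t ∈ T.1.erase x, a t with hPT
  have hSv : a x * PS = v := by
    rw [hPS, Finset.mul_prod_erase _ _ hxS]; exact hΦmem S hS
  have hTv : a x * PT = v := by
    rw [hPT, Finset.mul_prod_erase _ _ hxT]; exact hΦmem T hT
  have hPSPT : PS = PT := mul_left_cancel₀ (ha0 x) (hSv.trans hTv.symm)
  -- new subsets
  have hyS' : y ∉ S.1.erase x := fun h => hyS (Finset.mem_of_mem_erase h)
  have hyT' : y ∉ T.1.erase x := fun h => hyT (Finset.mem_of_mem_erase h)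
  have hcS' : (insert y (S.1.erase x)).card = i := by
    rw [Finset.card_insert_of_notMem hyS', Finset.card_erase_of_mem hxS, S.2]
    omega
  have hcT' : (insert y (T.1.erase x)).card = i := by
    rw [Finset.card_insert_of_notMem hyT', Finset.card_erase_of_mem hxT, T.2]
    omega
  set S' : {S : Finset (Fin (n + 1)) // S.card = i} := ⟨insert y (S.1.erase x), hcS'⟩
  set T' : {S : Finset (Fin (n + 1)) // S.card = i} := ⟨insert y (T.1.erase x), hcT'⟩
  have hprodS' : (∏ t ∈ S'.1, a t) = a y * PS := by
    simp only [S', Finset.prod_insert hyS', hPS]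
  have hprodT' : (∏ t ∈ T'.1, a t) = a y * PT := by
    simp only [T', Finset.prod_insert hyT', hPT]
  have hS'T' : S' ≠ T' := by
    intro h
    apply hST
    have h1 : insert y (S.1.erase x) = insert y (T.1.erase x) := congrArg Subtype.val h
    have h2 : S.1.erase x = T.1.erase x := by
      have := congrArg (fun s => Finset.erase s y) h1
      simpa [Finset.erase_insert hyS', Finset.erase_insert hyT'] using this
    apply Subtype.ext
    rw [← Finset.insert_erase hxS, h2, Finset.insert_erase hxT]
  have hkey : (∏ t ∈ S'.1, a t) = ∏ t ∈ S.1, a t := by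
    have := hac S' T' S T hS'T'
      (show (∏ t ∈ S'.1, a t) = ∏ t ∈ T'.1, a t by rw [hprodS', hprodT', hPSPT]) hST
      ((hΦmem S hS).trans (hΦmem T hT).symm)
    exact this
  rw [hprodS', ← Finset.mul_prod_erase _ _ hxS, ← hPS] at hkey
  have hPSne : PS ≠ 0 := by
    rw [hPS]
    exact Finset.prod_ne_zero_iff.mpr fun t _ => ha0 t
  have : a y = a x := mul_right_cancel₀ hPSne hkey
  exact hyS (hinj this ▸ hxS)
end

section
/- Let F be a field, n ≥ 1 an integer, and x₁, …, xₙ nonzero elements of F with x_i² ≠ 1 for every i. For a sign vector c = (c₁,…,cₙ) ∈ {1,−1}ⁿ set e_c = ∏_{i=1}ⁿ x_i^{c_i}. If the family (e_c), indexed by all 2ⁿ sign vectors c, is almost cyclic, then every value of F is attained by at most two sign vectors c, i.e. every value has multiplicity at most 2 in the family. -/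
lemma flip_prod {F : Type*} [Field F] {n : ℕ} (x : Fin n → F) (hx0 : ∀ i, x i ≠ 0)
    (r : Fin n → ℤˣ) (i : Fin n) :
    ∏ j, x j ^ ((Function.update r i (-(r i)) j : ℤ)) =
      (∏ j, x j ^ ((r j : ℤ))) * x i ^ (-2 * ((r i : ℤ))) := by
  rw [← Finset.mul_prod_erase Finset.univ _ (Finset.mem_univ i),
      ← Finset.mul_prod_erase Finset.univ (fun j => x j ^ ((r j : ℤ))) (Finset.mem_univ i)]
  rw [Finset.prod_congr rfl (fun j hj => by
      rw [Function.update_of_ne (Finset.ne_of_mem_erase hj)])]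
  rw [Function.update_self]
  rw [show (((-(r i) : ℤˣ)) : ℤ) = (r i : ℤ) + (-2 * (r i : ℤ)) by push_cast; ring,
      zpow_add₀ (hx0 i)]
  ring

lemma pow_ne_one {F : Type*} [Field F] {y : F} (hy0 : y ≠ 0) (hy2 : y ^ 2 ≠ 1)
    (u : ℤˣ) : y ^ (-2 * (u : ℤ)) ≠ 1 := by
  rcases Int.units_eq_one_or u with h | h <;> rw [h] <;> intro hh <;> apply hy2
  · rw [show (-2 * ((1 : ℤˣ) : ℤ)) = -2 by norm_num, zpow_neg, inv_eq_one] at hh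
    exact_mod_cast hh
  · rw [show (-2 * ((-1 : ℤˣ) : ℤ)) = 2 by norm_num] at hh
    exact_mod_cast hh

/-- Let `x₁,…,xₙ` be nonzero elements of a field `F` with `x_i² ≠ 1` for every
`i`.  For a sign vector `c ∈ {1,-1}ⁿ` set `e_c = ∏ x_i^{c_i}`.  If the family
`(e_c)` over all `2ⁿ` sign vectors is almost cyclic, then every value of `F`
has multiplicity at most `2` in the family. -/
theorem stmt8 {F : Type*} [Field F] [DecidableEq F] {n : ℕ} (hn : 1 ≤ n)
    (x : Fin n → F) (hx0 : ∀ i, x i ≠ 0) (hx2 : ∀ i, x i ^ 2 ≠ 1)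
    (hac : AlmostCyclic (fun c : Fin n → ℤˣ => ∏ i, x i ^ ((c i : ℤ)))) :
    ∀ v : F,
      (Finset.univ.filter
        fun c : Fin n → ℤˣ => (∏ i, x i ^ ((c i : ℤ))) = v).card ≤ 2 := by
  intro v
  by_contra hcard
  push_neg at hcard
  rw [Finset.two_lt_card] at hcard
  obtain ⟨a, ha, b, hb, c, hc, hab, hac2, hbc⟩ := hcard
  simp only [Finset.mem_filter, Finset.mem_univ, true_and] at ha hb hc
  obtain ⟨i, hi⟩ : ∃ i, a i ≠ b i := by
    by_contra h'; push_neg at h'; exact hab (funext h')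
  have hv0 : v ≠ 0 := by
    rw [← ha]
    exact Finset.prod_ne_zero_iff.2 fun j _ => zpow_ne_zero _ (hx0 j)
  have key : ∀ p q : Fin n → ℤˣ, p ≠ q →
      (∏ j, x j ^ ((p j : ℤ))) = v → (∏ j, x j ^ ((q j : ℤ))) = v → p i = q i → False := by
    intro p q hpq hep heq hpqi
    obtain ⟨j, hj⟩ : ∃ j, p j ≠ q j := by
      by_contra h'; push_neg at h'; exact hpq (funext h')
    have hji : j ≠ i := fun h => hj (h ▸ hpqi)
    have hp' : (∏ k, x k ^ ((Function.update p i (-(p i)) k : ℤ)))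
        = v * x i ^ (-2 * ((p i : ℤ))) := by rw [flip_prod x hx0, hep]
    have hq' : (∏ k, x k ^ ((Function.update q i (-(q i)) k : ℤ)))
        = v * x i ^ (-2 * ((p i : ℤ))) := by rw [flip_prod x hx0, heq, hpqi]
    have hne : Function.update p i (-(p i)) ≠ Function.update q i (-(q i)) := by
      intro h
      apply hj
      have := congrFun h j
      rwa [Function.update_of_ne hji, Function.update_of_ne hji] at this
    have h1 := hac p q (Function.update p i (-(p i))) (Function.update q i (-(q i)))
      hpq (hep.trans heq.symm) hne (hp'.trans hq'.symm)
    dsimp only at h1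
    rw [hep, hp'] at h1
    have : x i ^ (-2 * ((p i : ℤ))) = 1 := by
      exact (mul_left_cancel₀ hv0
        (show v * 1 = v * x i ^ (-2 * ((p i : ℤ))) by rw [mul_one, ← h1])).symm
    exact pow_ne_one (hx0 i) (hx2 i) (p i) this
  have hci : c i = a i ∨ c i = b i := by
    rcases Int.units_eq_one_or (a i) with h1 | h1 <;>
      rcases Int.units_eq_one_or (b i) with h2 | h2 <;>
      rcases Int.units_eq_one_or (c i) with h3 | h3 <;> simp_all
  rcases hci with h | h
  · exact key a c hac2 ha hc h.symm
  · exact key b c hbc hb hc h.symm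
end

section
/- Let F be a field, n ≥ 4 an integer, and x₁, …, xₙ nonzero elements of F such that x_i² x_j² ≠ 1 and x_i² ≠ x_j² for all i ≠ j. Fix ε ∈ {1, −1}. For a sign vector c = (c₁,…,cₙ) ∈ {1,−1}ⁿ with c₁c₂⋯cₙ = ε, set e_c = ∏_{i=1}ⁿ x_i^{c_i}. If the family (e_c), indexed by all sign vectors c with c₁⋯cₙ = ε, is almost cyclic, then every value of F is attained by at most two such sign vectors c. -/
/-- Flip the signs of a sign vector at positions `i` and `j`. -/
private def flipFun {n : ℕ} (i j : Fin n) (d : Fin n → ℤˣ) (k : Fin n) : ℤˣ :=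
  d k * ((if k = i then -1 else 1) * (if k = j then -1 else 1))

private lemma flip_aux {F : Type*} [Field F] {n : ℕ}
    (x : Fin n → F) (hx0 : ∀ i, x i ≠ 0)
    (hreg1 : ∀ i j, i ≠ j → x i ^ 2 * x j ^ 2 ≠ 1)
    (hreg2 : ∀ i j, i ≠ j → x i ^ 2 ≠ x j ^ 2)
    {ε : ℤˣ}
    (hac : AlmostCyclic
      (fun c : {c : Fin n → ℤˣ // ∏ i, c i = ε} => ∏ i, x i ^ ((c.1 i : ℤ))))
    {i j : Fin n} (hij : i ≠ j)
    (d₁ d₂ : {c : Fin n → ℤˣ // ∏ i, c i = ε}) (hne : d₁ ≠ d₂)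
    (hv : (∏ k, x k ^ ((d₁.1 k : ℤ))) = ∏ k, x k ^ ((d₂.1 k : ℤ)))
    (hi : d₁.1 i = d₂.1 i) (hj : d₁.1 j = d₂.1 j) : False := by
  classical
  have hprod : ∀ d : Fin n → ℤˣ, (∏ k, d k = ε) → ∏ k, flipFun i j d k = ε := by
    intro d hd
    unfold flipFun
    rw [Finset.prod_mul_distrib, Finset.prod_mul_distrib, hd,
      Finset.prod_ite_eq' Finset.univ i (fun _ => (-1 : ℤˣ)),
      Finset.prod_ite_eq' Finset.univ j (fun _ => (-1 : ℤˣ))]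
    simp
  have hval : ∀ d : Fin n → ℤˣ, (∏ k, x k ^ ((flipFun i j d k : ℤ))) =
      (∏ k, x k ^ ((d k : ℤ))) *
        (x i ^ (-2 * ((d i : ℤ))) * x j ^ (-2 * ((d j : ℤ)))) := by
    intro d
    have hpt : ∀ k ∈ Finset.univ, x k ^ ((flipFun i j d k : ℤ)) =
        x k ^ ((d k : ℤ)) * ((if k = i then x i ^ (-2 * ((d i : ℤ))) else 1) *
          (if k = j then x j ^ (-2 * ((d j : ℤ))) else 1)) := by
      intro k _
      rcases eq_or_ne k i with rfl | hki
      · have hkj : k ≠ j := hij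
        have e1 : flipFun k j d k = -(d k) := by simp [flipFun, hkj]
        rw [e1, if_pos rfl, if_neg hkj, mul_one]
        have e2 : ((-(d k) : ℤˣ) : ℤ) = (d k : ℤ) + (-2 * (d k : ℤ)) := by
          push_cast; ring
        rw [e2, zpow_add₀ (hx0 k)]
      · rcases eq_or_ne k j with rfl | hkj
        · have e1 : flipFun i k d k = -(d k) := by simp [flipFun, hki]
          rw [e1, if_pos rfl, if_neg hki, one_mul]
          have e2 : ((-(d k) : ℤˣ) : ℤ) = (d k : ℤ) + (-2 * (d k : ℤ)) := by
            push_cast; ring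
          rw [e2, zpow_add₀ (hx0 k)]
        · have e1 : flipFun i j d k = d k := by simp [flipFun, hki, hkj]
          rw [e1, if_neg hki, if_neg hkj, mul_one, mul_one]
    rw [Finset.prod_congr rfl hpt, Finset.prod_mul_distrib, Finset.prod_mul_distrib,
      Finset.prod_ite_eq' Finset.univ i (fun _ => x i ^ (-2 * ((d i : ℤ)))),
      Finset.prod_ite_eq' Finset.univ j (fun _ => x j ^ (-2 * ((d j : ℤ))))]
    simp
  set v : F := ∏ k, x k ^ ((d₁.1 k : ℤ)) with hvdef
  set t : F := x i ^ (-2 * ((d₁.1 i : ℤ))) * x j ^ (-2 * ((d₁.1 j : ℤ))) with htdef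
  set D₁ : {c : Fin n → ℤˣ // ∏ i, c i = ε} := ⟨flipFun i j d₁.1, hprod _ d₁.2⟩ with hD₁def
  set D₂ : {c : Fin n → ℤˣ // ∏ i, c i = ε} := ⟨flipFun i j d₂.1, hprod _ d₂.2⟩ with hD₂def
  have hD1 : (∏ k, x k ^ ((D₁.1 k : ℤ))) = v * t := hval d₁.1
  have hD2 : (∏ k, x k ^ ((D₂.1 k : ℤ))) = v * t := by
    have := hval d₂.1
    rw [← hi, ← hj, ← hv] at this
    exact this
  have hDne : D₁ ≠ D₂ := by
    intro h
    apply hne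
    apply Subtype.ext
    funext k
    have hk : flipFun i j d₁.1 k = flipFun i j d₂.1 k :=
      congrFun (congrArg Subtype.val h) k
    unfold flipFun at hk
    exact mul_right_cancel hk
  have hmain : v = v * t := by
    have := hac d₁ d₂ D₁ D₂ hne hv hDne (hD1.trans hD2.symm)
    simpa [hD1] using this
  have hv0 : v ≠ 0 :=
    Finset.prod_ne_zero_iff.mpr (fun k _ => zpow_ne_zero _ (hx0 k))
  have ht1 : t = 1 := (mul_left_cancel₀ hv0 (by rw [mul_one]; exact hmain.symm))
  rw [htdef] at ht1
  rcases Int.units_eq_one_or (d₁.1 i) with hui | hui <;>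
    rcases Int.units_eq_one_or (d₁.1 j) with huj | huj <;>
      rw [hui, huj] at ht1
  · -- both +1 : 1 / (x i ^ 2 * x j ^ 2) = 1
    have h2 : x i ^ 2 * x j ^ 2 = 1 := by
      field_simp at ht1
      norm_num [zpow_ofNat] at ht1
      rw [← mul_inv, inv_eq_one] at ht1
      linear_combination ht1
    exact hreg1 i j hij h2
  · -- +1, -1 : x j ^ 2 / x i ^ 2 = 1
    have h2 : x j ^ 2 = x i ^ 2 := by
      field_simp at ht1
      norm_num [zpow_ofNat] at ht1
      rw [← div_eq_inv_mul, div_eq_one_iff_eq (pow_ne_zero _ (hx0 i))] at ht1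
      exact ht1
    exact hreg2 j i (Ne.symm hij) h2
  · -- -1, +1
    have h2 : x i ^ 2 = x j ^ 2 := by
      field_simp at ht1
      norm_num [zpow_ofNat] at ht1
      rw [← div_eq_mul_inv, div_eq_one_iff_eq (pow_ne_zero _ (hx0 j))] at ht1
      exact ht1
    exact hreg2 i j hij h2
  · -- -1, -1
    have h2 : x i ^ 2 * x j ^ 2 = 1 := by
      field_simp at ht1
      norm_num [zpow_ofNat] at ht1
      exact ht1
    exact hreg1 i j hij h2

/-- Half-spin eigenvalues for type `D_n`: let `n ≥ 4` and `x₁,…,xₙ` be nonzero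
elements of a field `F` with `x_i² x_j² ≠ 1` and `x_i² ≠ x_j²` for `i ≠ j`
(regularity).  Fix `ε ∈ {1,-1}`.  For a sign vector `c ∈ {1,-1}ⁿ` with
`c₁⋯cₙ = ε`, set `e_c = ∏ x_i^{c_i}`.  If the family `(e_c)` over all such
sign vectors is almost cyclic, then every value of `F` is attained by at most
two such sign vectors. -/
theorem stmt9 {F : Type*} [Field F] [DecidableEq F] {n : ℕ} (hn : 4 ≤ n)
    (x : Fin n → F) (hx0 : ∀ i, x i ≠ 0)
    (hreg1 : ∀ i j, i ≠ j → x i ^ 2 * x j ^ 2 ≠ 1)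
    (hreg2 : ∀ i j, i ≠ j → x i ^ 2 ≠ x j ^ 2)
    (ε : ℤˣ)
    (hac : AlmostCyclic
      (fun c : {c : Fin n → ℤˣ // ∏ i, c i = ε} => ∏ i, x i ^ ((c.1 i : ℤ)))) :
    ∀ v : F,
      (Finset.univ.filter
        fun c : {c : Fin n → ℤˣ // ∏ i, c i = ε} =>
          (∏ i, x i ^ ((c.1 i : ℤ))) = v).card ≤ 2 := by
  intro v
  by_contra hcard
  push_neg at hcard
  rw [Finset.two_lt_card_iff] at hcard
  obtain ⟨a, b, c, ha, hb, hc, hab, hac2, hbc⟩ := hcard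
  simp only [Finset.mem_filter, Finset.mem_univ, true_and] at ha hb hc
  have key : ∀ k : Fin n, a.1 k = b.1 k ∨ a.1 k = c.1 k ∨ b.1 k = c.1 k := by
    intro k
    rcases Int.units_eq_one_or (a.1 k) with h1 | h1 <;>
      rcases Int.units_eq_one_or (b.1 k) with h2 | h2 <;>
        rcases Int.units_eq_one_or (c.1 k) with h3 | h3 <;> simp [h1, h2, h3]
  classical
  set f : Fin n → Fin 3 := fun k =>
    if a.1 k = b.1 k then 0 else if a.1 k = c.1 k then 1 else 2 with hf
  obtain ⟨i, j, hij, hfij⟩ := Fintype.exists_ne_map_eq_of_card_lt f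
    (by simp only [Fintype.card_fin]; omega)
  have hagree : (a.1 i = b.1 i ∧ a.1 j = b.1 j) ∨ (a.1 i = c.1 i ∧ a.1 j = c.1 j) ∨
      (b.1 i = c.1 i ∧ b.1 j = c.1 j) := by
    have ki := key i
    have kj := key j
    simp only [hf] at hfij
    split_ifs at hfij <;> first
      | (exact absurd hfij (by decide))
      | tauto
  rcases hagree with ⟨h1, h2⟩ | ⟨h1, h2⟩ | ⟨h1, h2⟩
  · exact flip_aux x hx0 hreg1 hreg2 hac hij a b hab (ha.trans hb.symm) h1 h2
  · exact flip_aux x hx0 hreg1 hreg2 hac hij a c hac2 (ha.trans hc.symm) h1 h2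
  · exact flip_aux x hx0 hreg1 hreg2 hac hij b c hbc (hb.trans hc.symm) h1 h2
end

section
/- Let F be a field and let a₁, a₂, a₃ be nonzero elements of F such that a_i² ≠ 1 for each i, and a_i a_j ≠ 1 and a_i ≠ a_j for all i ≠ j. Consider the family of 14 elements of F consisting of the six elements a₁, a₂, a₃, a₁⁻¹, a₂⁻¹, a₃⁻¹ together with the eight elements a₁^{c₁} a₂^{c₂} a₃^{c₃} for (c₁,c₂,c₃) ∈ {1,−1}³. If this family is almost cyclic, then every value of F is attained at most twice in the family. -/
namespace Stmt10Aux

variable {F : Type*} [Field F]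

/-- The products `a₁^{c₁} a₂^{c₂} a₃^{c₃}`. -/
def P (a : Fin 3 → F) (c : Fin 3 → ℤˣ) : F := ∏ i, a i ^ ((c i : ℤ))

/-- The full family of 14 eigenvalues. -/
def E (a : Fin 3 → F) : (Fin 3 × ℤˣ) ⊕ (Fin 3 → ℤˣ) → F :=
  Sum.elim (fun q : Fin 3 × ℤˣ => a q.1 ^ ((q.2 : ℤ)))
    (fun c : Fin 3 → ℤˣ => ∏ i, a i ^ ((c i : ℤ)))

lemma singles_inj (a : Fin 3 → F) (ha0 : ∀ i, a i ≠ 0) (ha2 : ∀ i, a i ^ 2 ≠ 1)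
    (hmul : ∀ i j, i ≠ j → a i * a j ≠ 1)
    (hne : ∀ i j, i ≠ j → a i ≠ a j)
    (i j : Fin 3) (u w : ℤˣ) (h : a i ^ ((u : ℤ)) = a j ^ ((w : ℤ))) : i = j ∧ u = w := by
  have hi := ha0 i
  have hj := ha0 j
  by_cases hij : i = j
  · subst hij
    refine ⟨rfl, ?_⟩
    rcases Int.units_eq_one_or u with rfl | rfl <;> rcases Int.units_eq_one_or w with rfl | rfl
    · rfl
    · exfalso
      simp only [Units.val_one, Units.val_neg, zpow_one, zpow_neg] at h
      apply ha2 i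
      field_simp at h
      first | exact h | exact h.symm | linear_combination h | linear_combination -h
    · exfalso
      simp only [Units.val_one, Units.val_neg, zpow_one, zpow_neg] at h
      apply ha2 i
      field_simp at h
      first | exact h | exact h.symm | linear_combination h | linear_combination -h
    · rfl
  · exfalso
    rcases Int.units_eq_one_or u with rfl | rfl <;> rcases Int.units_eq_one_or w with rfl | rfl <;>
      simp only [Units.val_one, Units.val_neg, zpow_one, zpow_neg] at h
    · exact hne i j hij h
    · exact hmul i j hij (by field_simp at h; first | exact h | exact h.symm | linear_combination h | linear_combination -h)
    · exact hmul i j hij (by field_simp at h; first | exact h | exact h.symm | linear_combination h | linear_combination -h)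
    · exact hne i j hij (by field_simp at h; first | exact h | exact h.symm)

end Stmt10Aux

namespace Stmt10Aux

variable {F : Type*} [Field F]

lemma hbinv_aux (a : Fin 3 → F) (ha0 : ∀ i, a i ≠ 0) (ha2 : ∀ i, a i ^ 2 ≠ 1)
    (hmul : ∀ i j, i ≠ j → a i * a j ≠ 1)
    (hne : ∀ i j, i ≠ j → a i ≠ a j) (c : Fin 3 → ℤˣ) :
    ∀ m n, a m ^ ((c m : ℤ)) ≠ (a n ^ ((c n : ℤ)))⁻¹ := by
  intro m n hmn
  have h : a m ^ ((c m : ℤ)) = a n ^ (((-(c n) : ℤˣ) : ℤ)) := by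
    rw [hmn, Units.val_neg, zpow_neg]
  obtain ⟨h1, h2⟩ := singles_inj a ha0 ha2 hmul hne m n (c m) (-(c n)) h
  subst h1
  rcases Int.units_eq_one_or (c m) with hcn | hcn <;> rw [hcn] at h2 <;> exact absurd h2 (by decide)

lemma Ptwo (a : Fin 3 → F) (ha0 : ∀ i, a i ≠ 0) (ha2 : ∀ i, a i ^ 2 ≠ 1)
    (hmul : ∀ i j, i ≠ j → a i * a j ≠ 1)
    (hne : ∀ i j, i ≠ j → a i ≠ a j) (c d : Fin 3 → ℤˣ) (hcd : c ≠ d)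
    (h : P a c = P a d) :
    (d = fun m => -(c m)) ∧ P a c * P a c = 1 ∨
    ∃ l, d = Function.update (fun m => -(c m)) l (c l) ∧ P a c = -(a l ^ ((c l : ℤ))) := by
  have hb0 : ∀ m, a m ^ ((c m : ℤ)) ≠ 0 := fun m => zpow_ne_zero _ (ha0 m)
  have hbinv := hbinv_aux a ha0 ha2 hmul hne c
  have hbne : ∀ m n, m ≠ n → a m ^ ((c m : ℤ)) ≠ a n ^ ((c n : ℤ)) := by
    intro m n hmn hb'
    exact hmn (singles_inj a ha0 ha2 hmul hne m n (c m) (c n) hb').1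
  have hP : P a c = a 0 ^ ((c 0 : ℤ)) * a 1 ^ ((c 1 : ℤ)) * a 2 ^ ((c 2 : ℤ)) :=
    Fin.prod_univ_three _
  have hPd : P a d = a 0 ^ ((d 0 : ℤ)) * a 1 ^ ((d 1 : ℤ)) * a 2 ^ ((d 2 : ℤ)) :=
    Fin.prod_univ_three _
  set A := a 0 ^ ((c 0 : ℤ)) with hA
  set B := a 1 ^ ((c 1 : ℤ)) with hB
  set C := a 2 ^ ((c 2 : ℤ)) with hC
  have hcoord : ∀ m, d m = c m ∨ d m = -(c m) := by
    intro m
    rcases Int.units_eq_one_or (c m) with h1 | h1 <;>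
      rcases Int.units_eq_one_or (d m) with h2 | h2 <;> simp [h1, h2]
  have hval : ∀ m, d m = -(c m) → a m ^ ((d m : ℤ)) = (a m ^ ((c m : ℤ)))⁻¹ := by
    intro m hm
    rw [hm, Units.val_neg, zpow_neg]
  have htri : ∀ m : Fin 3, m = 0 ∨ m = 1 ∨ m = 2 := by decide
  rcases hcoord 0 with h0 | h0 <;> rcases hcoord 1 with h1 | h1 <;> rcases hcoord 2 with h2 | h2
  -- (eq,eq,eq)
  · exact absurd (funext fun m => by rcases htri m with rfl | rfl | rfl <;> [exact h0; exact h1; exact h2]) hcd.symm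
  -- (eq,eq,neg)
  · exfalso
    rw [hP, hPd, h0, h1, hval 2 h2] at h
    exact hbinv 2 2 (mul_left_cancel₀ (mul_ne_zero (hb0 0) (hb0 1)) h)
  -- (eq,neg,eq)
  · exfalso
    rw [hP, hPd, h0, hval 1 h1, h2] at h
    have h' : B * (A * C) = B⁻¹ * (A * C) := by ring_nf; ring_nf at h; linear_combination h
    exact hbinv 1 1 (mul_right_cancel₀ (mul_ne_zero (hb0 0) (hb0 2)) h')
  -- (eq,neg,neg) : l = 0
  · right
    refine ⟨0, funext fun m => ?_, ?_⟩
    · rcases htri m with rfl | rfl | rfl <;> simp [Function.update, h0, h1, h2]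
    · rw [hP, hPd, h0, hval 1 h1, hval 2 h2] at h
      have hs : (B * C) = (B * C)⁻¹ := by
        have h' : (B * C) * A = (B * C)⁻¹ * A := by rw [mul_inv]; linear_combination h
        exact mul_right_cancel₀ (hb0 0) h'
      have hs1 : B * C ≠ 1 := by
        intro h1'
        exact hbinv 1 2 (eq_inv_of_mul_eq_one_left h1')
      have hsq : (B * C) * (B * C) = 1 := by
        nth_rewrite 2 [hs]
        exact mul_inv_cancel₀ (mul_ne_zero (hb0 1) (hb0 2))
      have hfac : (B * C - 1) * (B * C + 1) = 0 := by linear_combination hsq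
      rcases mul_eq_zero.mp hfac with hf | hf
      · exact absurd (by linear_combination hf) hs1
      · have hneg : B * C = -1 := by linear_combination hf
        rw [hP]
        linear_combination A * hneg
  -- (neg,eq,eq)
  · exfalso
    rw [hP, hPd, hval 0 h0, h1, h2] at h
    have h' : A * (B * C) = A⁻¹ * (B * C) := by ring_nf; ring_nf at h; linear_combination h
    exact hbinv 0 0 (mul_right_cancel₀ (mul_ne_zero (hb0 1) (hb0 2)) h')
  -- (neg,eq,neg) : l = 1
  · right
    refine ⟨1, funext fun m => ?_, ?_⟩
    · rcases htri m with rfl | rfl | rfl <;> simp [Function.update, h0, h1, h2]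
    · rw [hP, hPd, hval 0 h0, h1, hval 2 h2] at h
      have hs : (A * C) = (A * C)⁻¹ := by
        have h' : (A * C) * B = (A * C)⁻¹ * B := by rw [mul_inv]; linear_combination h
        exact mul_right_cancel₀ (hb0 1) h'
      have hs1 : A * C ≠ 1 := by
        intro h1'
        exact hbinv 0 2 (eq_inv_of_mul_eq_one_left h1')
      have hsq : (A * C) * (A * C) = 1 := by
        nth_rewrite 2 [hs]
        exact mul_inv_cancel₀ (mul_ne_zero (hb0 0) (hb0 2))
      have hfac : (A * C - 1) * (A * C + 1) = 0 := by linear_combination hsq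
      rcases mul_eq_zero.mp hfac with hf | hf
      · exact absurd (by linear_combination hf) hs1
      · have hneg : A * C = -1 := by linear_combination hf
        rw [hP]
        linear_combination B * hneg
  -- (neg,neg,eq) : l = 2
  · right
    refine ⟨2, funext fun m => ?_, ?_⟩
    · rcases htri m with rfl | rfl | rfl <;> simp [Function.update, h0, h1, h2]
    · rw [hP, hPd, hval 0 h0, hval 1 h1, h2] at h
      have hs : (A * B) = (A * B)⁻¹ := by
        have h' : (A * B) * C = (A * B)⁻¹ * C := by rw [mul_inv]; linear_combination h
        exact mul_right_cancel₀ (hb0 2) h'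
      have hs1 : A * B ≠ 1 := by
        intro h1'
        exact hbinv 0 1 (eq_inv_of_mul_eq_one_left h1')
      have hsq : (A * B) * (A * B) = 1 := by
        nth_rewrite 2 [hs]
        exact mul_inv_cancel₀ (mul_ne_zero (hb0 0) (hb0 1))
      have hfac : (A * B - 1) * (A * B + 1) = 0 := by linear_combination hsq
      rcases mul_eq_zero.mp hfac with hf | hf
      · exact absurd (by linear_combination hf) hs1
      · have hneg : A * B = -1 := by linear_combination hf
        rw [hP]
        linear_combination C * hneg
  -- (neg,neg,neg)
  · left
    refine ⟨funext fun m => ?_, ?_⟩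
    · rcases htri m with rfl | rfl | rfl <;> [exact h0; exact h1; exact h2]
    · rw [hP, hPd, hval 0 h0, hval 1 h1, hval 2 h2] at h
      have hA0 : A ≠ 0 := hb0 0
      have hB0 : B ≠ 0 := hb0 1
      have hC0 : C ≠ 0 := hb0 2
      rw [hP]
      nth_rewrite 2 [h]
      rw [← hA, ← hB, ← hC]
      field_simp

end Stmt10Aux

namespace Stmt10Aux

variable {F : Type*} [Field F]

lemma P_update (a : Fin 3 → F) (ha0 : ∀ i, a i ≠ 0) (c : Fin 3 → ℤˣ) (l : Fin 3) :
    P a (Function.update c l (-(c l))) =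
      P a c * (a l ^ ((c l : ℤ)))⁻¹ * (a l ^ ((c l : ℤ)))⁻¹ := by
  have htri : ∀ m : Fin 3, m = 0 ∨ m = 1 ∨ m = 2 := by decide
  have hb0 : ∀ m, a m ^ ((c m : ℤ)) ≠ 0 := fun m => zpow_ne_zero _ (ha0 m)
  have h0 := hb0 0
  have h1 := hb0 1
  have h2 := hb0 2
  rcases htri l with rfl | rfl | rfl
  · rw [P, P, Fin.prod_univ_three, Fin.prod_univ_three,
      Function.update_apply, Function.update_apply, Function.update_apply,
      if_pos rfl, if_neg (by decide), if_neg (by decide), Units.val_neg, zpow_neg]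
    field_simp
    all_goals ring
  · rw [P, P, Fin.prod_univ_three, Fin.prod_univ_three,
      Function.update_apply, Function.update_apply, Function.update_apply,
      if_pos rfl, if_neg (by decide), if_neg (by decide), Units.val_neg, zpow_neg]
    field_simp
    all_goals ring
  · rw [P, P, Fin.prod_univ_three, Fin.prod_univ_three,
      Function.update_apply, Function.update_apply, Function.update_apply,
      if_pos rfl, if_neg (by decide), if_neg (by decide), Units.val_neg, zpow_neg]
    field_simp
    all_goals ring

lemma sq_ne (a : Fin 3 → F) (ha0 : ∀ i, a i ≠ 0) (ha2 : ∀ i, a i ^ 2 ≠ 1)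
    (l : Fin 3) (u : ℤˣ) : a l ^ ((u : ℤ)) * a l ^ ((u : ℤ)) ≠ 1 := by
  intro h
  apply ha2 l
  have := ha0 l
  rcases Int.units_eq_one_or u with rfl | rfl <;>
      simp only [Units.val_one, Units.val_neg, zpow_one, zpow_neg] at h
  · linear_combination h
  · field_simp at h
    first | exact h | exact h.symm | linear_combination h | linear_combination -h

lemma lemB (a : Fin 3 → F) (ha0 : ∀ i, a i ≠ 0) (ha2 : ∀ i, a i ^ 2 ≠ 1)
    (hmul : ∀ i j, i ≠ j → a i * a j ≠ 1)
    (hne : ∀ i j, i ≠ j → a i ≠ a j)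
    (hac : AlmostCyclic (E a)) (i : Fin 3) (u : ℤˣ) (c d : Fin 3 → ℤˣ)
    (hcd : c ≠ d) (h1 : a i ^ ((u : ℤ)) = P a c) (h2 : P a c = P a d) : False := by
  rcases Ptwo a ha0 ha2 hmul hne c d hcd h2 with ⟨hd, hsq⟩ | ⟨l, hd, hPc⟩
  · rw [← h1] at hsq
    exact sq_ne a ha0 ha2 i u hsq
  · have hAl : a l ^ ((c l : ℤ)) ≠ 0 := zpow_ne_zero _ (ha0 l)
    have hv : a i ^ (((-u : ℤˣ) : ℤ)) = P a (Function.update c l (-(c l))) := by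
      rw [P_update a ha0 c l, hPc, Units.val_neg, zpow_neg, h1, hPc]
      field_simp
    have key : E a (Sum.inl (i, u)) = E a (Sum.inl (i, -u)) :=
      hac (Sum.inl (i, u)) (Sum.inr c) (Sum.inl (i, -u))
        (Sum.inr (Function.update c l (-(c l))))
        (by simp) h1 (by simp) hv
    have key' : a i ^ ((u : ℤ)) = a i ^ (((-u : ℤˣ) : ℤ)) := key
    obtain ⟨-, hu⟩ := singles_inj a ha0 ha2 hmul hne i i u (-u) key'
    rcases Int.units_eq_one_or u with rfl | rfl <;> exact absurd hu (by decide)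

lemma lemC (a : Fin 3 → F) (ha0 : ∀ i, a i ≠ 0) (ha2 : ∀ i, a i ^ 2 ≠ 1)
    (hmul : ∀ i j, i ≠ j → a i * a j ≠ 1)
    (hne : ∀ i j, i ≠ j → a i ≠ a j)
    (c d e : Fin 3 → ℤˣ) (hcd : c ≠ d) (hce : c ≠ e) (hde : d ≠ e)
    (h1 : P a c = P a d) (h2 : P a c = P a e) : False := by
  rcases Ptwo a ha0 ha2 hmul hne c d hcd h1 with ⟨hd, hsq⟩ | ⟨l1, hd, hP1⟩ <;>
    rcases Ptwo a ha0 ha2 hmul hne c e hce h2 with ⟨he, hsq2⟩ | ⟨l2, he, hP2⟩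
  · exact hde (hd.trans he.symm)
  · rw [hP2] at hsq
    exact sq_ne a ha0 ha2 l2 (c l2) (by linear_combination hsq)
  · rw [hP1] at hsq2
    exact sq_ne a ha0 ha2 l1 (c l1) (by linear_combination hsq2)
  · have hll : a l1 ^ ((c l1 : ℤ)) = a l2 ^ ((c l2 : ℤ)) :=
      neg_injective (hP1.symm.trans hP2)
    obtain ⟨rfl, -⟩ := singles_inj a ha0 ha2 hmul hne l1 l2 (c l1) (c l2) hll
    exact hde (hd.trans he.symm)

end Stmt10Aux

/-- Eigenvalues of a regular element of `Sp₆(F)` on `V_{ω₃}`: the family of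
`14` elements consisting of `a_i^{±1}` (`i = 1,2,3`) together with the eight
products `a₁^{c₁} a₂^{c₂} a₃^{c₃}` (`c ∈ {1,-1}³`), where `a_i² ≠ 1`,
`a_i a_j ≠ 1` and `a_i ≠ a_j` for `i ≠ j`.  If this family is almost cyclic,
then every value of `F` is attained at most twice. -/
theorem stmt10 {F : Type*} [Field F] [DecidableEq F]
    (a : Fin 3 → F) (ha0 : ∀ i, a i ≠ 0) (ha2 : ∀ i, a i ^ 2 ≠ 1)
    (hmul : ∀ i j, i ≠ j → a i * a j ≠ 1)
    (hne : ∀ i j, i ≠ j → a i ≠ a j)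
    (hac : AlmostCyclic
      (Sum.elim
        (fun q : Fin 3 × ℤˣ => a q.1 ^ ((q.2 : ℤ)))
        (fun c : Fin 3 → ℤˣ => ∏ i, a i ^ ((c i : ℤ))))) :
    ∀ v : F,
      (Finset.univ.filter
        fun t : (Fin 3 × ℤˣ) ⊕ (Fin 3 → ℤˣ) =>
          Sum.elim
            (fun q : Fin 3 × ℤˣ => a q.1 ^ ((q.2 : ℤ)))
            (fun c : Fin 3 → ℤˣ => ∏ i, a i ^ ((c i : ℤ))) t = v).card ≤ 2 := by
  intro v
  by_contra hcard
  push_neg at hcard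
  rw [Finset.two_lt_card_iff] at hcard
  obtain ⟨t1, t2, t3, ht1, ht2, ht3, h12, h13, h23⟩ := hcard
  simp only [Finset.mem_filter, Finset.mem_univ, true_and] at ht1 ht2 ht3
  have hac' : AlmostCyclic (Stmt10Aux.E a) := hac
  have lA : ∀ (q1 q2 : Fin 3 × ℤˣ),
      a q1.1 ^ ((q1.2 : ℤ)) = a q2.1 ^ ((q2.2 : ℤ)) → q1 = q2 := by
    intro q1 q2 h
    obtain ⟨h1, h2⟩ := Stmt10Aux.singles_inj a ha0 ha2 hmul hne q1.1 q2.1 q1.2 q2.2 h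
    exact Prod.ext h1 h2
  rcases t1 with q1 | c1 <;> rcases t2 with q2 | c2 <;> rcases t3 with q3 | c3 <;>
    simp only [Sum.elim_inl, Sum.elim_inr] at ht1 ht2 ht3
  · exact h12 (by rw [lA q1 q2 (ht1.trans ht2.symm)])
  · exact h12 (by rw [lA q1 q2 (ht1.trans ht2.symm)])
  · exact h13 (by rw [lA q1 q3 (ht1.trans ht3.symm)])
  · exact Stmt10Aux.lemB a ha0 ha2 hmul hne hac' q1.1 q1.2 c2 c3
      (fun hh => h23 (by rw [hh])) (ht1.trans ht2.symm) (ht2.trans ht3.symm)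
  · exact h23 (by rw [lA q2 q3 (ht2.trans ht3.symm)])
  · exact Stmt10Aux.lemB a ha0 ha2 hmul hne hac' q2.1 q2.2 c1 c3
      (fun hh => h13 (by rw [hh])) (ht2.trans ht1.symm) (ht1.trans ht3.symm)
  · exact Stmt10Aux.lemB a ha0 ha2 hmul hne hac' q3.1 q3.2 c1 c2
      (fun hh => h12 (by rw [hh])) (ht3.trans ht1.symm) (ht1.trans ht2.symm)
  · exact Stmt10Aux.lemC a ha0 ha2 hmul hne c1 c2 c3
      (fun hh => h12 (by rw [hh])) (fun hh => h13 (by rw [hh])) (fun hh => h23 (by rw [hh]))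
      (ht1.trans ht2.symm) (ht1.trans ht3.symm)
end

section
/- Let p > 3 be a prime, F a field, n ≥ 2 an integer, and a₁, …, aₙ nonzero elements of F such that a_i² ≠ 1 for every i, and a_i a_j ≠ 1 and a_i ≠ a_j for all i ≠ j. For an integer vector l = (l₁,…,lₙ) ∈ ℤⁿ with 2|l_i| ≤ p − 1 for each i, set e_l = ∏_{i=1}ⁿ a_i^{l_i}. If the family (e_l), indexed by all such integer vectors l, is almost cyclic, then every value of F is attained by at most two vectors l. -/
/-- Let `p > 3` be a prime, `n ≥ 2`, and `a₁,…,aₙ` nonzero elements of a field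
`F` with `a_i² ≠ 1`, `a_i a_j ≠ 1` and `a_i ≠ a_j` for `i ≠ j`.  For an integer
vector `l` with `2|l_i| ≤ p - 1`, set `e_l = ∏ a_i^{l_i}`.  If the family
`(e_l)` over all such vectors is almost cyclic, then every value of `F` is
attained by at most two vectors `l` (any three vectors with equal values
coincide in pairs). -/
theorem stmt11 {p : ℕ} (hp : p.Prime) (hp3 : 3 < p)
    {F : Type*} [Field F] {n : ℕ} (hn : 2 ≤ n)
    (a : Fin n → F) (ha0 : ∀ i, a i ≠ 0) (ha2 : ∀ i, a i ^ 2 ≠ 1)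
    (hmul : ∀ i j, i ≠ j → a i * a j ≠ 1)
    (hne : ∀ i j, i ≠ j → a i ≠ a j)
    (hac : AlmostCyclic
      (fun l : {l : Fin n → ℤ // ∀ i, 2 * |l i| ≤ (p : ℤ) - 1} =>
        ∏ i, a i ^ (l.1 i))) :
    ∀ l₁ l₂ l₃ : {l : Fin n → ℤ // ∀ i, 2 * |l i| ≤ (p : ℤ) - 1},
      (∏ i, a i ^ (l₁.1 i)) = (∏ i, a i ^ (l₂.1 i)) →
      (∏ i, a i ^ (l₂.1 i)) = (∏ i, a i ^ (l₃.1 i)) →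
      l₁ = l₂ ∨ l₁ = l₃ ∨ l₂ = l₃ := by
  intro l₁ l₂ l₃ h12 h23
  by_contra hcon
  push_neg at hcon
  obtain ⟨h12ne, h13ne, h23ne⟩ := hcon
  have hodd : p % 2 = 1 := (Nat.Prime.eq_two_or_odd hp).resolve_left (by omega)
  have habs : ∀ z : ℤ, (2*|z| ≤ (p:ℤ)-1 ↔ (2*z ≤ (p:ℤ)-1 ∧ -((p:ℤ)-1) ≤ 2*z)) := by
    intro z
    rcases abs_cases z with ⟨h1, h2⟩ | ⟨h1, h2⟩ <;> rw [h1] <;> omega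
  have key : ∀ u v : {l : Fin n → ℤ // ∀ i, 2 * |l i| ≤ (p : ℤ) - 1},
      u ≠ v → (∏ i, a i ^ (u.1 i)) = (∏ i, a i ^ (v.1 i)) → v.1 = -u.1 := by
    intro u v huv hev
    have prodshift : ∀ (w : Fin n → ℤ) (j : Fin n) (δ : ℤ),
        (∏ i, a i ^ ((w + (Pi.single j δ : Fin n → ℤ)) i)) = (∏ i, a i ^ w i) * a j ^ δ := by
      intro w j δ
      calc ∏ i, a i ^ ((w + (Pi.single j δ : Fin n → ℤ)) i)
          = ∏ i, (a i ^ w i * a i ^ ((Pi.single j δ : Fin n → ℤ) i)) := by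
            refine Finset.prod_congr rfl fun i _ => ?_
            rw [Pi.add_apply, zpow_add₀ (ha0 i)]
        _ = (∏ i, a i ^ w i) * ∏ i, a i ^ ((Pi.single j δ : Fin n → ℤ) i) :=
            Finset.prod_mul_distrib
        _ = (∏ i, a i ^ w i) * a j ^ δ := by
            congr 1
            rw [Finset.prod_eq_single j (fun b _ hb => by
              rw [Pi.single_eq_of_ne hb, zpow_zero]) (fun h => absurd (Finset.mem_univ j) h)]
            rw [Pi.single_eq_same]
    have noshift : ∀ (j : Fin n) (δ : ℤ), (δ = 1 ∨ δ = -1) →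
        ¬(2 * |u.1 j + δ| ≤ (p:ℤ) - 1 ∧ 2 * |v.1 j + δ| ≤ (p:ℤ) - 1) := by
      rintro j δ hδ ⟨hu, hv⟩
      have hbu : ∀ i, 2 * |(u.1 + (Pi.single j δ : Fin n → ℤ)) i| ≤ (p:ℤ) - 1 := by
        intro i
        by_cases hij : i = j
        · subst hij; simpa using hu
        · simpa [Pi.single_eq_of_ne hij] using u.2 i
      have hbv : ∀ i, 2 * |(v.1 + (Pi.single j δ : Fin n → ℤ)) i| ≤ (p:ℤ) - 1 := by
        intro i
        by_cases hij : i = j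
        · subst hij; simpa using hv
        · simpa [Pi.single_eq_of_ne hij] using v.2 i
      set u' : {l : Fin n → ℤ // ∀ i, 2 * |l i| ≤ (p : ℤ) - 1} := ⟨u.1 + (Pi.single j δ : Fin n → ℤ), hbu⟩
      set v' : {l : Fin n → ℤ // ∀ i, 2 * |l i| ≤ (p : ℤ) - 1} := ⟨v.1 + (Pi.single j δ : Fin n → ℤ), hbv⟩
      have hu'v' : u' ≠ v' := by
        intro h
        have h' : u.1 + (Pi.single j δ : Fin n → ℤ) = v.1 + (Pi.single j δ : Fin n → ℤ) := congrArg Subtype.val h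
        exact huv (Subtype.ext (add_right_cancel h'))
      have hee : (∏ i, a i ^ (u'.1 i)) = (∏ i, a i ^ (v'.1 i)) := by
        show (∏ i, a i ^ ((u.1 + (Pi.single j δ : Fin n → ℤ)) i)) = (∏ i, a i ^ ((v.1 + (Pi.single j δ : Fin n → ℤ)) i))
        rw [prodshift, prodshift, hev]
      have h1 : (∏ i, a i ^ (u.1 i)) = ∏ i, a i ^ (u'.1 i) := hac u v u' v' huv hev hu'v' hee
      have h2 : (∏ i, a i ^ (u.1 i)) = (∏ i, a i ^ (u.1 i)) * a j ^ δ :=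
        h1.trans (prodshift u.1 j δ)
      have hne0 : (∏ i, a i ^ (u.1 i)) ≠ 0 :=
        Finset.prod_ne_zero_iff.mpr fun i _ => zpow_ne_zero _ (ha0 i)
      have hone : a j ^ δ = 1 := by
        rcases (mul_right_eq_self₀).mp h2.symm with h | h
        · exact h
        · exact absurd h hne0
      have haj : a j = 1 := by
        rcases hδ with rfl | rfl
        · simpa using hone
        · simpa [zpow_neg, inv_eq_one] using hone
      exact ha2 j (by rw [haj]; ring)
    funext j
    rw [Pi.neg_apply]
    have h1 := noshift j 1 (Or.inl rfl)
    have h2 := noshift j (-1) (Or.inr rfl)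
    have bu := u.2 j
    have bv := v.2 j
    rw [habs] at bu bv
    rw [habs, habs] at h1
    rw [habs, habs] at h2
    omega
  have e2 := key l₁ l₂ h12ne h12
  have e3 := key l₁ l₃ h13ne (h12.trans h23)
  exact h23ne (Subtype.ext (e2.trans e3.symm))
end

section
/- Let F be a field, n > 2 an integer, and a₁, …, aₙ nonzero elements of F such that a_i² ≠ 1 for every i, and a_i a_j ≠ 1 and a_i ≠ a_j for all i ≠ j. Fix δ ∈ {0, 1}. Consider the family of elements e_{S,c} = ∏_{i∈S} a_i^{c(i)}, indexed by all pairs (S, c) where S is a nonempty subset of {1, …, n} with |S| ≡ n − δ (mod 2) and c : S → {1, −1} is a sign function. If this family is almost cyclic, then every value of F is attained by at most two pairs (S, c). -/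
/-- Index type: pairs `(S, c)` where `S` is a nonempty subset of `{1,…,n}`
with `|S| ≡ n - δ (mod 2)` and `c : S → {1,-1}` is a sign function. -/
def SpinIndex (n δ : ℕ) : Type :=
  Σ S : {S : Finset (Fin n) // S.Nonempty ∧ S.card % 2 = (n - δ) % 2},
    ({x // x ∈ S.1} → ℤˣ)

/-- The element `e_{S,c} = ∏_{i ∈ S} a_i^{c(i)}` of `F` attached to a pair `(S, c)`. -/
def spinEig {F : Type*} [Field F] {n δ : ℕ} (a : Fin n → F) (t : SpinIndex n δ) : F :=
  ∏ x ∈ t.1.1.attach, a x.1 ^ ((t.2 x : ℤ))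

namespace Aux
variable {F : Type*} [Field F] {n δ : ℕ}

def mk (S : Finset (Fin n)) (h : S.Nonempty ∧ S.card % 2 = (n - δ) % 2)
    (c : Fin n → ℤˣ) : SpinIndex n δ := ⟨⟨S, h⟩, fun x => c x.1⟩

lemma spinEig_mk (a : Fin n → F) (S : Finset (Fin n)) (h) (c : Fin n → ℤˣ) :
    spinEig a (mk (δ := δ) S h c) = ∏ i ∈ S, a i ^ ((c i : ℤ)) := by
  simpa [spinEig, mk] using Finset.prod_attach S (fun i => a i ^ ((c i : ℤ)))

def sgn (t : SpinIndex n δ) (i : Fin n) : ℤˣ :=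
  if h : i ∈ t.1.1 then t.2 ⟨i, h⟩ else 1

lemma sgn_mk (S : Finset (Fin n)) (h) (c : Fin n → ℤˣ) (i : Fin n) (hi : i ∈ S) :
    sgn (mk (δ := δ) S h c) i = c i := by
  simp [sgn, mk, hi]

lemma set_of_mk_eq {S T : Finset (Fin n)} {hS hT} {c d : Fin n → ℤˣ}
    (h : mk (δ := δ) S hS c = mk T hT d) : S = T :=
  congrArg (fun t : SpinIndex n δ => t.1.1) h

lemma sgn_of_mk_eq {S : Finset (Fin n)} {hS hT} {c d : Fin n → ℤˣ}
    (h : mk (δ := δ) S hS c = mk S hT d) {i : Fin n} (hi : i ∈ S) : c i = d i := by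
  have h1 : sgn (mk (δ := δ) S hS c) i = sgn (mk (δ := δ) S hT d) i :=
    congrArg (fun t => sgn t i) h
  rwa [sgn_mk S hS c i hi, sgn_mk S hT d i hi] at h1

lemma mk_eq {S T : Finset (Fin n)} (hST : S = T) {hS hT} {c d : Fin n → ℤˣ}
    (h : ∀ i ∈ S, c i = d i) : mk (δ := δ) S hS c = mk T hT d := by
  subst hST
  exact congrArg (Sigma.mk _) (funext fun x => h x.1 x.2)

lemma exists_mk (t : SpinIndex n δ) : ∃ S h c, t = mk (δ := δ) S h c := by
  refine ⟨t.1.1, t.1.2, fun i => if h : i ∈ t.1.1 then t.2 ⟨i, h⟩ else 1, ?_⟩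
  obtain ⟨⟨S, hS⟩, c⟩ := t
  exact congrArg (Sigma.mk _) (funext fun x => by simp [mk, x.2])

lemma P_ne_zero (a : Fin n → F) (ha0 : ∀ i, a i ≠ 0) (S : Finset (Fin n)) (c : Fin n → ℤˣ) :
    (∏ i ∈ S, a i ^ ((c i : ℤ))) ≠ 0 :=
  Finset.prod_ne_zero_iff.mpr fun i _ => zpow_ne_zero _ (ha0 i)

lemma prod_update (a : Fin n → F) (S : Finset (Fin n)) (c : Fin n → ℤˣ) (j : Fin n)
    (hj : j ∉ S) (s : ℤˣ) :
    ∏ i ∈ insert j S, a i ^ ((Function.update c j s i : ℤ))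
      = a j ^ ((s : ℤ)) * ∏ i ∈ S, a i ^ ((c i : ℤ)) := by
  rw [Finset.prod_insert hj, Function.update_self]
  congr 1
  exact Finset.prod_congr rfl fun i hi => by
    rw [Function.update_of_ne (ne_of_mem_of_not_mem hi hj)]

lemma prod_erase (a : Fin n → F) (S : Finset (Fin n)) (c : Fin n → ℤˣ) (i : Fin n)
    (hi : i ∈ S) :
    ∏ j ∈ S, a j ^ ((c j : ℤ)) = a i ^ ((c i : ℤ)) * ∏ j ∈ S.erase i, a j ^ ((c j : ℤ)) :=
  (Finset.mul_prod_erase S _ hi).symm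

lemma unit_mul_ne_one (a : Fin n → F) (ha0 : ∀ i, a i ≠ 0)
    (hmul : ∀ i j, i ≠ j → a i * a j ≠ 1) (hne : ∀ i j, i ≠ j → a i ≠ a j)
    {i j : Fin n} (hij : i ≠ j) (s t : ℤˣ) :
    a i ^ ((s : ℤ)) * a j ^ ((t : ℤ)) ≠ 1 := by
  rcases Int.units_eq_one_or s with rfl | rfl <;> rcases Int.units_eq_one_or t with rfl | rfl <;>
    intro h <;> simp only [Units.val_one, Units.val_neg, zpow_one, zpow_neg] at h
  · exact hmul i j hij h
  · rw [← div_eq_mul_inv] at h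
    exact hne i j hij ((div_eq_one_iff_eq (ha0 j)).mp h)
  · exact hne j i hij.symm ((div_eq_one_iff_eq (ha0 i)).mp (by
      rwa [mul_comm, ← div_eq_mul_inv] at h))
  · refine hmul i j hij ?_
    have h2 : ((a i)⁻¹ * (a j)⁻¹) * (a i * a j) = a i * a j := by rw [h, one_mul]
    rw [show ((a i)⁻¹ * (a j)⁻¹) * (a i * a j) = (a i * a j) / (a i * a j) by ring] at h2
    rw [div_self (mul_ne_zero (ha0 i) (ha0 j))] at h2
    exact h2.symm

lemma zpow_neg_ne_self (a : Fin n → F) (ha0 : ∀ i, a i ≠ 0) (ha2 : ∀ i, a i ^ 2 ≠ 1)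
    (i : Fin n) (s : ℤˣ) : a i ^ (-(s : ℤ)) ≠ a i ^ ((s : ℤ)) := by
  rcases Int.units_eq_one_or s with rfl | rfl <;>
    intro h <;> simp only [Units.val_one, Units.val_neg, zpow_one, zpow_neg, neg_neg,
      inv_inv] at h
  · exact ha2 i (by rw [sq]; nth_rewrite 1 [← h]; exact inv_mul_cancel₀ (ha0 i))
  · exact ha2 i (by rw [sq]; nth_rewrite 2 [h]; exact mul_inv_cancel₀ (ha0 i))

section Moves

variable (a : Fin n → F) (ha0 : ∀ i, a i ≠ 0) (ha2 : ∀ i, a i ^ 2 ≠ 1)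
  (hmul : ∀ i j, i ≠ j → a i * a j ≠ 1) (hne : ∀ i j, i ≠ j → a i ≠ a j)
  (hac : AlmostCyclic (fun t : SpinIndex n δ => spinEig a t))

include hac

/-- From a distinct pair with equal value `e` and another distinct pair
with a common value different from `e`, conclude `False`. -/
lemma clash {u v u' v' : SpinIndex n δ} (huv : u ≠ v)
    (h1 : spinEig a u = spinEig a v) (h2 : u' ≠ v')
    (h3 : spinEig a u' = spinEig a v') (hw : spinEig a u ≠ spinEig a u') : False :=
  hw (hac u v u' v' huv h1 h2 h3)

include ha0 ha2 in
/-- Move A : same support, a common index with equal signs. -/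
lemma moveA {S : Finset (Fin n)} {hS hT} {c d : Fin n → ℤˣ}
    (hpair : mk (δ := δ) S hS c ≠ mk S hT d)
    (heq : spinEig a (mk (δ := δ) S hS c) = spinEig a (mk S hT d))
    {i : Fin n} (hi : i ∈ S) (hcd : c i = d i) : False := by
  -- a second index where the signs differ
  have hex : ∃ j ∈ S, c j ≠ d j := by
    by_contra hall
    push_neg at hall
    exact hpair (mk_eq rfl hall)
  obtain ⟨j, hj, hcdj⟩ := hex
  have hji : j ≠ i := fun h => hcdj (h ▸ hcd)
  have hiE : i ∉ S.erase i := Finset.notMem_erase i S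
  have hins : insert i (S.erase i) = S := Finset.insert_erase hi
  set Q := ∏ k ∈ S.erase i, a k ^ ((c k : ℤ)) with hQ
  set R := ∏ k ∈ S.erase i, a k ^ ((d k : ℤ)) with hR
  have hEc : spinEig a (mk (δ := δ) S hS c) = a i ^ ((c i : ℤ)) * Q := by
    rw [spinEig_mk]; exact prod_erase a S c i hi
  have hEd : spinEig a (mk (δ := δ) S hT d) = a i ^ ((d i : ℤ)) * R := by
    rw [spinEig_mk]; exact prod_erase a S d i hi
  have hQR : Q = R := by
    have h1 : a i ^ ((c i : ℤ)) * Q = a i ^ ((c i : ℤ)) * R := by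
      rw [← hEc, heq, hEd, hcd]
    exact mul_left_cancel₀ (zpow_ne_zero _ (ha0 i)) h1
  refine clash a hac hpair heq (u' := mk S hS (Function.update c i (-(c i))))
    (v' := mk S hT (Function.update d i (-(d i)))) ?_ ?_ ?_
  · intro h
    have := sgn_of_mk_eq h hj
    rw [Function.update_of_ne hji, Function.update_of_ne hji] at this
    exact hcdj this
  · rw [spinEig_mk, spinEig_mk, ← hins, prod_update a _ c i hiE, prod_update a _ d i hiE,
      ← hQ, ← hR, hQR, hcd]
  · rw [hEc, spinEig_mk, ← hins, prod_update a _ c i hiE, ← hQ]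
    intro h
    have h2 : a i ^ ((c i : ℤ)) = a i ^ (-((c i) : ℤ)) := by
      have := mul_right_cancel₀ (P_ne_zero a ha0 _ _) h
      simpa using this
    exact zpow_neg_ne_self a ha0 ha2 i (c i) h2.symm


include ha0 hmul hne in
/-- Move E : an index in `S \\ T` and one in `T \\ S` can be swapped. -/
lemma moveE {S T : Finset (Fin n)} {hS hT} {c d : Fin n → ℤˣ}
    (hpair : mk (δ := δ) S hS c ≠ mk T hT d)
    (heq : spinEig a (mk (δ := δ) S hS c) = spinEig a (mk T hT d))
    {i j : Fin n} (hi : i ∈ S) (hiT : i ∉ T) (hj : j ∈ T) (hjS : j ∉ S) : False := by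
  have hij : i ≠ j := fun h => hjS (h ▸ hi)
  have hjE : j ∉ S.erase i := fun h => hjS (Finset.mem_of_mem_erase h)
  have hiE : i ∉ T.erase j := fun h => hiT (Finset.mem_of_mem_erase h)
  have hScard : 1 ≤ S.card := Finset.card_pos.mpr hS.1
  have hTcard : 1 ≤ T.card := Finset.card_pos.mpr hT.1
  have hS' : (insert j (S.erase i)).Nonempty ∧
      (insert j (S.erase i)).card % 2 = (n - δ) % 2 := by
    refine ⟨Finset.insert_nonempty _ _, ?_⟩
    rw [Finset.card_insert_of_notMem hjE, Finset.card_erase_of_mem hi]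
    have := hS.2; omega
  have hT' : (insert i (T.erase j)).Nonempty ∧
      (insert i (T.erase j)).card % 2 = (n - δ) % 2 := by
    refine ⟨Finset.insert_nonempty _ _, ?_⟩
    rw [Finset.card_insert_of_notMem hiE, Finset.card_erase_of_mem hj]
    have := hT.2; omega
  set Q := ∏ k ∈ S.erase i, a k ^ ((c k : ℤ)) with hQ
  set R := ∏ k ∈ T.erase j, a k ^ ((d k : ℤ)) with hR
  have hQ0 : Q ≠ 0 := P_ne_zero a ha0 _ _
  have hR0 : R ≠ 0 := P_ne_zero a ha0 _ _
  have hx0 : a i ^ ((c i : ℤ)) ≠ 0 := zpow_ne_zero _ (ha0 i)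
  have hy0 : a j ^ ((d j : ℤ)) ≠ 0 := zpow_ne_zero _ (ha0 j)
  have hE : a i ^ ((c i : ℤ)) * Q = a j ^ ((d j : ℤ)) * R := by
    rw [hQ, hR, ← prod_erase a S c i hi, ← prod_erase a T d j hj,
      ← spinEig_mk a S hS c, ← spinEig_mk a T hT d]
    exact heq
  have hu' : spinEig a (mk (δ := δ) _ hS' (Function.update c j (-(d j))))
      = a j ^ (-((d j : ℤ))) * Q := by
    rw [spinEig_mk, prod_update a _ c j hjE]
    norm_num
    left; rfl
  have hv' : spinEig a (mk (δ := δ) _ hT' (Function.update d i (-(c i))))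
      = a i ^ (-((c i : ℤ))) * R := by
    rw [spinEig_mk, prod_update a _ d i hiE]
    norm_num
    left; rfl
  refine clash a hac hpair heq (u' := mk _ hS' (Function.update c j (-(d j))))
    (v' := mk _ hT' (Function.update d i (-(c i)))) ?_ ?_ ?_
  · intro h
    have hset := set_of_mk_eq h
    have : i ∈ insert j (S.erase i) := hset ▸ Finset.mem_insert_self i (T.erase j)
    rcases Finset.mem_insert.mp this with h' | h'
    · exact hij h'
    · exact Finset.notMem_erase i S h'
  · rw [hu', hv', zpow_neg, zpow_neg]
    field_simp
    linear_combination hE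
  · rw [spinEig_mk a S hS c, prod_erase a S c i hi, ← hQ, hu', zpow_neg]
    intro h
    have h2 : a i ^ ((c i : ℤ)) = (a j ^ ((d j : ℤ)))⁻¹ := mul_right_cancel₀ hQ0 h
    refine unit_mul_ne_one a ha0 hmul hne hij (c i) (d j) ?_
    rw [h2]
    exact inv_mul_cancel₀ hy0

include ha0 hmul hne in
/-- Move F : `S` strictly contained in `T`. -/
lemma moveSub {S T : Finset (Fin n)} {hS hT} {c d : Fin n → ℤˣ}
    (hpair : mk (δ := δ) S hS c ≠ mk T hT d)
    (heq : spinEig a (mk (δ := δ) S hS c) = spinEig a (mk T hT d))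
    (hsub : S ⊆ T) (hST : S ≠ T) : False := by
  have hlt : S.card < T.card := Finset.card_lt_card (hsub.ssubset_of_ne hST)
  have hpar : S.card % 2 = T.card % 2 := hS.2.trans hT.2.symm
  have hsd : 1 < (T \ S).card := by
    rw [Finset.card_sdiff_of_subset hsub]; omega
  obtain ⟨j, hjm, j', hj'm, hjj'⟩ := Finset.one_lt_card.mp hsd
  have hjT : j ∈ T := (Finset.mem_sdiff.mp hjm).1
  have hjS : j ∉ S := (Finset.mem_sdiff.mp hjm).2
  have hj'T : j' ∈ T := (Finset.mem_sdiff.mp hj'm).1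
  have hj'S : j' ∉ S := (Finset.mem_sdiff.mp hj'm).2
  have hj'I : j' ∉ insert j S := by
    simp only [Finset.mem_insert, not_or]
    exact ⟨fun h => hjj' h.symm, hj'S⟩
  have hj'e : j' ∈ T.erase j := Finset.mem_erase.mpr ⟨fun h => hjj' h.symm, hj'T⟩
  have hScard : 1 ≤ S.card := Finset.card_pos.mpr hS.1
  have hU : (insert j' (insert j S)).Nonempty ∧
      (insert j' (insert j S)).card % 2 = (n - δ) % 2 := by
    refine ⟨Finset.insert_nonempty _ _, ?_⟩
    rw [Finset.card_insert_of_notMem hj'I, Finset.card_insert_of_notMem hjS]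
    have := hS.2; omega
  have hVsub : S ⊆ (T.erase j).erase j' := fun x hx => Finset.mem_erase.mpr
    ⟨fun h => hj'S (h ▸ hx), Finset.mem_erase.mpr ⟨fun h => hjS (h ▸ hx), hsub hx⟩⟩
  have hV : ((T.erase j).erase j').Nonempty ∧
      ((T.erase j).erase j').card % 2 = (n - δ) % 2 := by
    constructor
    · obtain ⟨x, hx⟩ := hS.1; exact ⟨x, hVsub hx⟩
    · rw [Finset.card_erase_of_mem hj'e, Finset.card_erase_of_mem hjT]
      have := hT.2; omega
  set e := ∏ k ∈ S, a k ^ ((c k : ℤ)) with he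
  set V := ∏ k ∈ (T.erase j).erase j', a k ^ ((d k : ℤ)) with hVd
  have he0 : e ≠ 0 := P_ne_zero a ha0 _ _
  have hV0 : V ≠ 0 := P_ne_zero a ha0 _ _
  have hy0 : a j ^ ((d j : ℤ)) ≠ 0 := zpow_ne_zero _ (ha0 j)
  have hy'0 : a j' ^ ((d j' : ℤ)) ≠ 0 := zpow_ne_zero _ (ha0 j')
  have hE : e = a j ^ ((d j : ℤ)) * (a j' ^ ((d j' : ℤ)) * V) := by
    rw [he, hVd, ← prod_erase a (T.erase j) d j' hj'e, ← prod_erase a T d j hjT,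
      ← spinEig_mk a S hS c, ← spinEig_mk a T hT d]
    exact heq
  have hu' : spinEig a (mk (δ := δ) _ hU
      (Function.update (Function.update c j (-(d j))) j' (-(d j'))))
      = a j' ^ (-((d j' : ℤ))) * (a j ^ (-((d j : ℤ))) * e) := by
    rw [spinEig_mk, prod_update a _ _ j' hj'I, prod_update a _ c j hjS]
    norm_num
    left; left; rfl
  have hv' : spinEig a (mk (δ := δ) _ hV d) = V := spinEig_mk a _ hV d
  refine clash a hac hpair heq
    (u' := mk _ hU (Function.update (Function.update c j (-(d j))) j' (-(d j'))))
    (v' := mk _ hV d) ?_ ?_ ?_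
  · intro h
    have hset := set_of_mk_eq h
    have : j ∈ (T.erase j).erase j' := hset ▸ Finset.mem_insert_of_mem
      (Finset.mem_insert_self j S)
    exact Finset.notMem_erase j T (Finset.mem_of_mem_erase this)
  · rw [hu', hv', zpow_neg, zpow_neg]
    field_simp
    linear_combination hE
  · rw [spinEig_mk a S hS c, ← he, hu', zpow_neg, zpow_neg]
    intro h
    refine unit_mul_ne_one a ha0 hmul hne (by exact hjj' : j ≠ j') (d j) (d j') ?_
    have h2 : (1 : F) * e = (a j' ^ ((d j' : ℤ)))⁻¹ * ((a j ^ ((d j : ℤ)))⁻¹ * e) := by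
      rw [one_mul]; exact h
    field_simp at h2
    linear_combination h2


include ha0 ha2 hmul hne in
/-- If two distinct indices have the same value then they have the same support
and opposite signs everywhere. -/
lemma key {S T : Finset (Fin n)} {hS hT} {c d : Fin n → ℤˣ}
    (hpair : mk (δ := δ) S hS c ≠ mk T hT d)
    (heq : spinEig a (mk (δ := δ) S hS c) = spinEig a (mk T hT d)) :
    S = T ∧ ∀ i ∈ S, d i = -(c i) := by
  by_cases hST : S = T
  · subst hST
    refine ⟨rfl, fun i hi => ?_⟩
    by_contra hdi
    have hcd : c i = d i := by
      rcases Int.units_eq_one_or (c i) with h1 | h1 <;>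
        rcases Int.units_eq_one_or (d i) with h2 | h2 <;>
        rw [h1, h2] <;> rw [h1, h2] at hdi <;> first | rfl | simp at hdi
    exact moveA a ha0 ha2 hac hpair heq hi hcd
  · exfalso
    by_cases h1 : S ⊆ T
    · exact moveSub a ha0 hmul hne hac hpair heq h1 hST
    by_cases h2 : T ⊆ S
    · exact moveSub a ha0 hmul hne hac (Ne.symm hpair) heq.symm h2 (Ne.symm hST)
    obtain ⟨i, hi, hiT⟩ := Finset.not_subset.mp h1
    obtain ⟨j, hj, hjS⟩ := Finset.not_subset.mp h2
    exact moveE a ha0 hmul hne hac hpair heq hi hiT hj hjS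

end Moves
end Aux

/-- Let `n > 2`, `δ ∈ {0,1}`, and `a₁,…,aₙ` nonzero elements of a field `F`
with `a_i² ≠ 1`, `a_i a_j ≠ 1` and `a_i ≠ a_j` for `i ≠ j`.  If the family of
the `e_{S,c} = ∏_{i∈S} a_i^{c(i)}` over all pairs `(S, c)` with `S ≠ ∅`,
`|S| ≡ n - δ (mod 2)`, is almost cyclic, then every value of `F` is attained
by at most two pairs `(S, c)`. -/


theorem stmt12 {F : Type*} [Field F] {n : ℕ} (hn : 2 < n)
    (a : Fin n → F) (ha0 : ∀ i, a i ≠ 0) (ha2 : ∀ i, a i ^ 2 ≠ 1)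
    (hmul : ∀ i j, i ≠ j → a i * a j ≠ 1)
    (hne : ∀ i j, i ≠ j → a i ≠ a j)
    (δ : ℕ) (hδ : δ ≤ 1)
    (hac : AlmostCyclic (fun t : SpinIndex n δ => spinEig a t)) :
    ∀ t₁ t₂ t₃ : SpinIndex n δ,
      spinEig a t₁ = spinEig a t₂ → spinEig a t₂ = spinEig a t₃ →
      t₁ = t₂ ∨ t₁ = t₃ ∨ t₂ = t₃ := by

  intro t₁ t₂ t₃ h12 h23
  by_contra h
  push_neg at h
  obtain ⟨h12', h13', h23'⟩ := h
  obtain ⟨S₁, hS₁, c₁, rfl⟩ := Aux.exists_mk t₁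
  obtain ⟨S₂, hS₂, c₂, rfl⟩ := Aux.exists_mk t₂
  obtain ⟨S₃, hS₃, c₃, rfl⟩ := Aux.exists_mk t₃
  obtain ⟨hset2, hsgn2⟩ := Aux.key a ha0 ha2 hmul hne hac h12' h12
  obtain ⟨hset3, hsgn3⟩ := Aux.key a ha0 ha2 hmul hne hac h13' (h12.trans h23)
  refine h23' (Aux.mk_eq (hset2.symm.trans hset3) (fun i hi => ?_))
  have hi1 : i ∈ S₁ := hset2 ▸ hi
  rw [hsgn2 i hi1, hsgn3 i hi1]
end

section
/- Let F be a field and let M, M₁, M₂, V be invertible diagonal matrices over F of sizes r, m, m′, d respectively, with M₁, M₂ and V non-scalar. Assume that the set of diagonal values of M equals the set of all products e·f where e runs over the diagonal values of M₁ and f over the diagonal values of M₂, and that the Kronecker product M ⊗ V is almost cyclic. Then: (1) for i = 1, 2, the number of distinct diagonal values of M_i ⊗ V equals d times the number of distinct diagonal values of M_i; (2) every value occurs at most m times among the diagonal entries of M ⊗ V. -/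
/-- Let `M, M₁, M₂, V` be invertible diagonal matrices over a field `F` of sizes
`r, m, m', d`, with `M₁, M₂, V` non-scalar, such that the set of diagonal values
of `M` is the set of products of a diagonal value of `M₁` with one of `M₂`.
If the Kronecker product `M ⊗ V` is almost cyclic, then:
(1) for `i = 1, 2`, the number of distinct diagonal values of `M_i ⊗ V` equals
`d` times the number of distinct diagonal values of `M_i`; and
(2) every value occurs at most `m` times among the diagonal entries of `M ⊗ V`. -/
theorem stmt13 {F : Type*} [Field F] [DecidableEq F] {r m m' d : ℕ}
    (dM : Fin r → F) (d₁ : Fin m → F) (d₂ : Fin m' → F) (dV : Fin d → F)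
    (hM0 : ∀ i, dM i ≠ 0) (h₁0 : ∀ i, d₁ i ≠ 0) (h₂0 : ∀ i, d₂ i ≠ 0)
    (hV0 : ∀ i, dV i ≠ 0)
    (hns₁ : ∃ i j, d₁ i ≠ d₁ j) (hns₂ : ∃ i j, d₂ i ≠ d₂ j)
    (hnsV : ∃ i j, dV i ≠ dV j)
    (hE : Set.range dM = Set.image2 (· * ·) (Set.range d₁) (Set.range d₂))
    (hac : AlmostCyclic (fun p : Fin r × Fin d => dM p.1 * dV p.2)) :
    ((Finset.univ.image fun p : Fin m × Fin d => d₁ p.1 * dV p.2).card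
        = d * (Finset.univ.image d₁).card ∧
      (Finset.univ.image fun p : Fin m' × Fin d => d₂ p.1 * dV p.2).card
        = d * (Finset.univ.image d₂).card) ∧
    (∀ v : F,
      (Finset.univ.filter fun p : Fin r × Fin d => dM p.1 * dV p.2 = v).card ≤ m) := by
  classical
  obtain ⟨i₁, j₁, hd₁⟩ := hns₁
  obtain ⟨i₂, j₂, hd₂⟩ := hns₂
  obtain ⟨pV, qV, hdV⟩ := hnsV
  -- every diagonal value of M factors
  have hfac : ∀ a : Fin r, ∃ i j, d₁ i * d₂ j = dM a := by
    intro a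
    have h : dM a ∈ Set.image2 (· * ·) (Set.range d₁) (Set.range d₂) :=
      hE ▸ Set.mem_range_self a
    obtain ⟨x, ⟨i, rfl⟩, y, ⟨j, rfl⟩, h⟩ := h
    exact ⟨i, j, h⟩
  -- every product is a diagonal value of M
  have hsur : ∀ i j, ∃ a, dM a = d₁ i * d₂ j := by
    intro i j
    have h : d₁ i * d₂ j ∈ Set.range dM :=
      hE ▸ Set.mem_image2_of_mem ⟨i, rfl⟩ ⟨j, rfl⟩
    exact h
  -- dM is non-constant
  obtain ⟨a0, ha0⟩ := hsur i₁ i₂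
  obtain ⟨b0, hb0⟩ := hsur j₁ i₂
  have hab0 : dM a0 ≠ dM b0 := by
    rw [ha0, hb0]
    exact fun h => hd₁ (mul_right_cancel₀ (h₂0 i₂) h)
  -- dV is injective
  have hVinj : Function.Injective dV := by
    intro p q hpq
    by_contra hne
    have h1 := hac (a0, p) (a0, q) (b0, p) (b0, q)
      (by simp [Prod.ext_iff, hne]) (by simp [hpq])
      (by simp [Prod.ext_iff, hne]) (by simp [hpq])
    exact hab0 (mul_right_cancel₀ (hV0 p) h1)
  -- dM is injective
  have hMinj : Function.Injective dM := by
    intro a b hab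
    by_contra hne
    have h1 := hac (a, pV) (b, pV) (a, qV) (b, qV)
      (by simp [Prod.ext_iff, hne]) (by simp [hab])
      (by simp [Prod.ext_iff, hne]) (by simp [hab])
    exact hdV (mul_left_cancel₀ (hM0 a) h1)
  -- key cancellation lemma for d₁
  have key₁ : ∀ i j p q, d₁ i * dV p = d₁ j * dV q → d₁ i = d₁ j ∧ dV p = dV q := by
    intro i j p q h
    by_cases hij : d₁ i = d₁ j
    · exact ⟨hij, mul_left_cancel₀ (h₁0 i) (by rw [h, hij])⟩
    · exfalso
      have hpq : p ≠ q := by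
        rintro rfl
        exact hij (mul_right_cancel₀ (hV0 p) h)
      obtain ⟨a, ha⟩ := hsur i i₂
      obtain ⟨b, hb⟩ := hsur j i₂
      obtain ⟨a', ha'⟩ := hsur i j₂
      obtain ⟨b', hb'⟩ := hsur j j₂
      have hab : (a, p) ≠ ((b, q) : Fin r × Fin d) := by
        intro hcon
        have : a = b := (Prod.ext_iff.1 hcon).1
        rw [this, hb] at ha
        exact hij (mul_right_cancel₀ (h₂0 i₂) ha).symm
      have hab' : (a', p) ≠ ((b', q) : Fin r × Fin d) := by
        intro hcon
        have : a' = b' := (Prod.ext_iff.1 hcon).1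
        rw [this, hb'] at ha'
        exact hij (mul_right_cancel₀ (h₂0 j₂) ha').symm
      have e1 : dM a * dV p = dM b * dV q := by
        rw [ha, hb]
        rw [mul_right_comm, mul_right_comm (d₁ j), h]
      have e2 : dM a' * dV p = dM b' * dV q := by
        rw [ha', hb']
        rw [mul_right_comm, mul_right_comm (d₁ j), h]
      have h3 := hac (a, p) (b, q) (a', p) (b', q) hab e1 hab' e2
      simp only at h3
      rw [ha, ha'] at h3
      have : d₂ i₂ = d₂ j₂ := by
        apply mul_right_cancel₀ (hV0 p)
        apply mul_left_cancel₀ (h₁0 i)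
        rw [← mul_assoc, ← mul_assoc]; exact h3
      exact hd₂ this
  -- key cancellation lemma for d₂
  have key₂ : ∀ i j p q, d₂ i * dV p = d₂ j * dV q → d₂ i = d₂ j ∧ dV p = dV q := by
    intro i j p q h
    by_cases hij : d₂ i = d₂ j
    · exact ⟨hij, mul_left_cancel₀ (h₂0 i) (by rw [h, hij])⟩
    · exfalso
      have hpq : p ≠ q := by
        rintro rfl
        exact hij (mul_right_cancel₀ (hV0 p) h)
      obtain ⟨a, ha⟩ := hsur i₁ i
      obtain ⟨b, hb⟩ := hsur i₁ j
      obtain ⟨a', ha'⟩ := hsur j₁ i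
      obtain ⟨b', hb'⟩ := hsur j₁ j
      have hab : (a, p) ≠ ((b, q) : Fin r × Fin d) := by
        intro hcon
        have : a = b := (Prod.ext_iff.1 hcon).1
        rw [this, hb] at ha
        exact hij (mul_left_cancel₀ (h₁0 i₁) ha).symm
      have hab' : (a', p) ≠ ((b', q) : Fin r × Fin d) := by
        intro hcon
        have : a' = b' := (Prod.ext_iff.1 hcon).1
        rw [this, hb'] at ha'
        exact hij (mul_left_cancel₀ (h₁0 j₁) ha').symm
      have e1 : dM a * dV p = dM b * dV q := by
        rw [ha, hb, mul_assoc, mul_assoc, h]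
      have e2 : dM a' * dV p = dM b' * dV q := by
        rw [ha', hb', mul_assoc, mul_assoc, h]
      have h3 := hac (a, p) (b, q) (a', p) (b', q) hab e1 hab' e2
      simp only at h3
      rw [ha, ha'] at h3
      have : d₁ i₁ = d₁ j₁ := by
        apply mul_right_cancel₀ (hV0 p)
        apply mul_right_cancel₀ (h₂0 i)
        rw [mul_right_comm, mul_right_comm (d₁ j₁)]; exact h3
      exact hd₁ this
  have hVcard : (Finset.univ.image dV).card = d := by
    rw [Finset.card_image_of_injective _ hVinj, Finset.card_univ, Fintype.card_fin]
  -- generic counting lemma, applied to d₁ and d₂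
  have count : ∀ {n : ℕ} (e : Fin n → F),
      (∀ i j p q, e i * dV p = e j * dV q → e i = e j ∧ dV p = dV q) →
      (Finset.univ.image fun p : Fin n × Fin d => e p.1 * dV p.2).card
        = d * (Finset.univ.image e).card := by
    intro n e hkey
    have himg : (Finset.univ.image fun p : Fin n × Fin d => e p.1 * dV p.2)
        = Finset.image₂ (· * ·) (Finset.univ.image e) (Finset.univ.image dV) := by
      ext x
      simp only [Finset.mem_image, Finset.mem_image₂, Finset.mem_univ, true_and]
      constructor
      · rintro ⟨⟨i, p⟩, hx⟩
        exact ⟨e i, ⟨i, rfl⟩, dV p, ⟨p, rfl⟩, hx⟩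
      · rintro ⟨x', ⟨i, rfl⟩, y', ⟨p, rfl⟩, hx⟩
        exact ⟨(i, p), hx⟩
    rw [himg]
    have hinj : Set.InjOn (fun p : F × F => p.1 * p.2)
        ((Finset.univ.image e : Finset F) ×ˢ (Finset.univ.image dV : Finset F)) := by
      rintro ⟨x, y⟩ hxy ⟨x', y'⟩ hxy' heq
      simp only [Finset.coe_product, Set.mem_prod, Finset.mem_coe, Finset.coe_image,
        Set.mem_image, Finset.mem_univ] at hxy hxy'
      obtain ⟨⟨i, -, rfl⟩, ⟨p, -, rfl⟩⟩ := hxy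
      obtain ⟨⟨j, -, rfl⟩, ⟨q, -, rfl⟩⟩ := hxy'
      obtain ⟨h1, h2⟩ := hkey i j p q heq
      exact Prod.ext h1 h2
    rw [Finset.card_image₂_iff.2 hinj, hVcard, mul_comm]
  refine ⟨⟨count d₁ key₁, count d₂ key₂⟩, ?_⟩
  -- part (2)
  choose f₁ f₂ hf using hfac
  intro v
  refine le_trans (Finset.card_le_card_of_injOn (fun p : Fin r × Fin d => f₁ p.1)
    (fun a _ => Finset.mem_univ (f₁ a.1)) ?_) (by simp)
  · rintro ⟨a, p⟩ hp ⟨b, q⟩ hq heq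
    simp only [Finset.mem_coe, Finset.mem_filter, Finset.mem_univ, true_and] at hp hq
    simp only at heq
    have h : d₁ (f₁ a) * (d₂ (f₂ a) * dV p) = d₁ (f₁ a) * (d₂ (f₂ b) * dV q) := by
      rw [← mul_assoc, ← mul_assoc, hf, heq, hf, hp, hq]
    have h2 := mul_left_cancel₀ (h₁0 (f₁ a)) h
    obtain ⟨h3, h4⟩ := key₂ (f₂ a) (f₂ b) p q h2
    have hpq : p = q := hVinj h4
    have hab : a = b := by
      apply hMinj
      rw [← hf a, ← hf b, heq, h3]
    exact Prod.ext hab hpq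
end

section
/- Let F be a field and let M, M₁, M₂, V be invertible diagonal matrices over F, with V non-scalar. For a diagonal matrix X write E(X) for the set of its diagonal values. Assume: (i) for all f, f′ ∈ E(M₂) there exist distinct e, e′ ∈ E(M₁) such that ef, ef′, e′f, e′f′ all lie in E(M); (ii) every element of E(M) is a product of an element of E(M₁) and an element of E(M₂); (iii) the Kronecker product M ⊗ V is almost cyclic. Then the number of distinct diagonal values of M₂ ⊗ V equals |E(M₂)| times the size of V, and every value occurs at most (size of M₁) times among the diagonal entries of M ⊗ V. -/
/-- Let `M, M₁, M₂, V` be invertible diagonal matrices over a field `F`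
(of sizes `r, m₁, m₂, d`) with `V` non-scalar, `E(X)` denoting the set of
diagonal values of `X`.  Assume: (i) for all `f, f' ∈ E(M₂)` there are distinct
`e, e' ∈ E(M₁)` with `ef, ef', e'f, e'f' ∈ E(M)`; (ii) `E(M) ⊆ E(M₁)·E(M₂)`;
(iii) `M ⊗ V` is almost cyclic.  Then the number of distinct diagonal values
of `M₂ ⊗ V` equals `|E(M₂)|` times the size of `V`, and every value occurs at
most `m₁` times among the diagonal entries of `M ⊗ V`. -/
theorem stmt14 {F : Type*} [Field F] [DecidableEq F] {r m₁ m₂ d : ℕ}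
    (dM : Fin r → F) (d₁ : Fin m₁ → F) (d₂ : Fin m₂ → F) (dV : Fin d → F)
    (hM0 : ∀ i, dM i ≠ 0) (h₁0 : ∀ i, d₁ i ≠ 0) (h₂0 : ∀ i, d₂ i ≠ 0)
    (hV0 : ∀ i, dV i ≠ 0)
    (hnsV : ∃ i j, dV i ≠ dV j)
    (hi : ∀ f ∈ Set.range d₂, ∀ f' ∈ Set.range d₂,
      ∃ e ∈ Set.range d₁, ∃ e' ∈ Set.range d₁, e ≠ e' ∧
        e * f ∈ Set.range dM ∧ e * f' ∈ Set.range dM ∧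
        e' * f ∈ Set.range dM ∧ e' * f' ∈ Set.range dM)
    (hii : Set.range dM ⊆ Set.image2 (· * ·) (Set.range d₁) (Set.range d₂))
    (hac : AlmostCyclic (fun p : Fin r × Fin d => dM p.1 * dV p.2)) :
    (Finset.univ.image fun p : Fin m₂ × Fin d => d₂ p.1 * dV p.2).card
      = (Finset.univ.image d₂).card * d ∧
    (∀ v : F,
      (Finset.univ.filter fun p : Fin r × Fin d => dM p.1 * dV p.2 = v).card ≤ m₁) := by
  classical
  obtain ⟨jv, jw, hvw⟩ := hnsV
  rcases Nat.eq_zero_or_pos m₂ with hm₂ | hm₂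
  · -- degenerate case: m₂ = 0 forces r = 0
    subst hm₂
    have hr : r = 0 := by
      rcases Nat.eq_zero_or_pos r with h | h
      · exact h
      · obtain ⟨e, he, f, hf, hef⟩ := hii ⟨⟨0, h⟩, rfl⟩
        obtain ⟨k, rfl⟩ := hf
        exact k.elim0
    subst hr
    constructor
    · simp
    · intro v
      simp
  -- main case
  have f₀ := d₂ ⟨0, hm₂⟩
  -- dM is non-constant
  have hMnc : ∃ i i', dM i ≠ dM i' := by
    obtain ⟨e, ⟨ke, rfl⟩, e', ⟨ke', rfl⟩, hee, h1, _, h3, _⟩ :=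
      hi (d₂ ⟨0, hm₂⟩) ⟨_, rfl⟩ (d₂ ⟨0, hm₂⟩) ⟨_, rfl⟩
    obtain ⟨a, ha⟩ := h1
    obtain ⟨b, hb⟩ := h3
    refine ⟨a, b, ?_⟩
    rw [ha, hb]
    intro h
    exact hee (mul_right_cancel₀ (h₂0 _) h)
  have hVinj : Function.Injective dV := by
    intro j j' h
    by_contra hne
    obtain ⟨i₁, i₂, h12⟩ := hMnc
    have := hac (i₁, j) (i₁, j') (i₂, j) (i₂, j')
      (fun hp => hne (congrArg Prod.snd hp)) (by simp [h])
      (fun hp => hne (congrArg Prod.snd hp)) (by simp [h])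
    exact h12 (mul_right_cancel₀ (hV0 j) this)
  have hMinj : Function.Injective dM := by
    intro i i' h
    by_contra hne
    have := hac (i, jv) (i', jv) (i, jw) (i', jw)
      (fun hp => hne (congrArg Prod.fst hp)) (by simp [h])
      (fun hp => hne (congrArg Prod.fst hp)) (by simp [h])
    exact hvw (mul_left_cancel₀ (hM0 i) this)
  -- key claim: distinct values of d₂ stay distinct after multiplying by any dV values
  have key : ∀ f ∈ Set.range d₂, ∀ f' ∈ Set.range d₂, f ≠ f' →
      ∀ j j' : Fin d, f * dV j ≠ f' * dV j' := by
    intro f hf f' hf' hne j j' heq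
    obtain ⟨e, ⟨ke, rfl⟩, e', ⟨ke', rfl⟩, hee, h1, h2, h3, h4⟩ := hi f hf f' hf'
    obtain ⟨a, ha⟩ := h1
    obtain ⟨b, hb⟩ := h2
    obtain ⟨a', ha'⟩ := h3
    obtain ⟨b', hb'⟩ := h4
    have hab : a ≠ b := by
      intro h
      rw [h, hb] at ha
      exact hne (mul_left_cancel₀ (h₁0 ke) ha.symm)
    have hab' : a' ≠ b' := by
      intro h
      rw [h, hb'] at ha'
      exact hne (mul_left_cancel₀ (h₁0 ke') ha'.symm)
    have c1 : dM a * dV j = dM b * dV j' := by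
      rw [ha, hb, mul_assoc, mul_assoc, heq]
    have c2 : dM a' * dV j = dM b' * dV j' := by
      rw [ha', hb', mul_assoc, mul_assoc, heq]
    have := hac (a, j) (b, j') (a', j) (b', j')
      (fun hp => hab (congrArg Prod.fst hp)) c1
      (fun hp => hab' (congrArg Prod.fst hp)) c2
    simp only at this
    rw [ha, ha', mul_assoc, mul_assoc] at this
    have hf0 : f ≠ 0 := by
      obtain ⟨k, rfl⟩ := hf
      exact h₂0 k
    exact hee (mul_right_cancel₀ (mul_ne_zero hf0 (hV0 j)) this)
  constructor
  · -- part 1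
    have himg : (Finset.univ.image fun p : Fin m₂ × Fin d => d₂ p.1 * dV p.2)
        = ((Finset.univ.image d₂) ×ˢ (Finset.univ : Finset (Fin d))).image
            (fun q : F × Fin d => q.1 * dV q.2) := by
      ext x
      simp only [Finset.mem_image, Finset.mem_product, Finset.mem_univ, true_and,
        Prod.exists, and_true]
      constructor
      · rintro ⟨i, j, rfl⟩
        exact ⟨d₂ i, j, ⟨i, rfl⟩, rfl⟩
      · rintro ⟨y, j, ⟨i, rfl⟩, rfl⟩
        exact ⟨i, j, rfl⟩
    rw [himg, Finset.card_image_of_injOn, Finset.card_product, Finset.card_univ,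
      Fintype.card_fin]
    rintro ⟨f, j⟩ hp ⟨f', j'⟩ hq h
    simp only [Finset.mem_coe, Finset.mem_product, Finset.mem_image, Finset.mem_univ,
      true_and, and_true] at hp hq
    obtain ⟨i, rfl⟩ := hp
    obtain ⟨i', rfl⟩ := hq
    by_cases hff : d₂ i = d₂ i'
    · have : dV j = dV j' := by
        rw [hff] at h
        exact mul_left_cancel₀ (h₂0 i') h
      simp [hff, hVinj this]
    · exact absurd h (key _ ⟨i, rfl⟩ _ ⟨i', rfl⟩ hff j j')
  · -- part 2
    intro v
    have hdec : ∀ i : Fin r, ∃ ef : F × F, ef.1 ∈ Set.range d₁ ∧ ef.2 ∈ Set.range d₂ ∧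
        ef.1 * ef.2 = dM i := by
      intro i
      obtain ⟨e, he, f, hf, hef⟩ := hii ⟨i, rfl⟩
      exact ⟨(e, f), he, hf, hef⟩
    choose g hg1 hg2 hg3 using hdec
    calc (Finset.univ.filter fun p : Fin r × Fin d => dM p.1 * dV p.2 = v).card
        ≤ (Finset.univ.image d₁).card := by
          apply Finset.card_le_card_of_injOn (fun p => (g p.1).1)
          · intro p _
            obtain ⟨k, hk⟩ := hg1 p.1
            exact Finset.mem_image.2 ⟨k, Finset.mem_univ _, hk⟩
          · rintro ⟨i, j⟩ hp ⟨i', j'⟩ hq h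
            simp only [Finset.mem_coe, Finset.mem_filter, Finset.mem_univ, true_and] at hp hq
            simp only at h
            have he0 : (g i).1 ≠ 0 := by
              obtain ⟨k, hk⟩ := hg1 i
              rw [← hk]; exact h₁0 k
            have hv : (g i).1 * ((g i).2 * dV j) = (g i').1 * ((g i').2 * dV j') := by
              rw [← mul_assoc, ← mul_assoc, hg3, hg3, hp, hq]
            rw [← h] at hv
            have hv2 : (g i).2 * dV j = (g i').2 * dV j' := mul_left_cancel₀ he0 hv
            by_cases hff : (g i).2 = (g i').2
            · have hf0 : (g i').2 ≠ 0 := by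
                obtain ⟨k, hk⟩ := hg2 i'
                rw [← hk]; exact h₂0 k
              rw [hff] at hv2
              have hjj : j = j' := hVinj (mul_left_cancel₀ hf0 hv2)
              have hii' : i = i' := by
                apply hMinj
                rw [← hg3, ← hg3, hff, h]
              rw [hii', hjj]
            · exact absurd hv2 (key _ (hg2 i) _ (hg2 i') hff j j')
      _ ≤ m₁ := le_trans Finset.card_image_le (by simp)
end

section
/- Let p be a prime, i ≥ 1 an integer, and F an algebraically closed field of characteristic p. For a 2×2 matrix g over F let g^{[p^i]} denote the matrix obtained by raising every entry of g to the p^i-th power, and let ρ(g) = g ⊗ g^{[p^i]} (Kronecker product), a 4×4 matrix acting on F⁴. Then: (1) if K is a finite subfield of F with p^{2i} elements, the only F-subspaces of F⁴ invariant under ρ(g) for all g ∈ SL₂(K) are 0 and F⁴; (2) if K′ is a finite subfield of F with p^i elements, there exists an F-subspace W of F⁴ with 0 ≠ W ≠ F⁴ that is invariant under ρ(g) for all g ∈ SL₂(K′). -/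
open Matrix Polynomial

section Helpers

private def vec4 {F : Type*} [Field F] (a b c d : F) : Fin 2 × Fin 2 → F :=
  fun x => if x.1 = 0 then (if x.2 = 0 then a else b) else (if x.2 = 0 then c else d)

private lemma kron_mulVec {F : Type*} [Field F] (g h : Matrix (Fin 2) (Fin 2) F)
    (v : Fin 2 × Fin 2 → F) (x : Fin 2 × Fin 2) :
    (Matrix.kroneckerMap (· * ·) g h).mulVec v x =
      g x.1 0 * h x.2 0 * v (0,0) + g x.1 0 * h x.2 1 * v (0,1) +
      g x.1 1 * h x.2 0 * v (1,0) + g x.1 1 * h x.2 1 * v (1,1) := by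
  simp [Matrix.mulVec, dotProduct, Fintype.sum_prod_type, Fin.sum_univ_two,
    Matrix.kroneckerMap_apply]
  ring

private lemma sum4 {F : Type*} [Field F] {V : Type*} [AddCommGroup V] [Module F V]
    (e : Fin 4 → ℕ) (c : Fin 4 → V) (t : F) :
    ∑ k : Fin 4, t ^ e k • c k
      = t ^ e 0 • c 0 + t ^ e 1 • c 1 + t ^ e 2 • c 2 + t ^ e 3 • c 3 :=
  Fin.sum_univ_four _

private lemma upper_sum {F : Type*} [Field F] (q : ℕ) (hq : q ≠ 0) (t : F)
    (v : Fin 2 × Fin 2 → F) :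
    (Matrix.kroneckerMap (· * ·) !![1, t; 0, 1] ((!![1, t; 0, 1]).map fun x => x ^ q)).mulVec v
      = v + t ^ 1 • vec4 (v (1,0)) (v (1,1)) 0 0 + t ^ q • vec4 (v (0,1)) 0 (v (1,1)) 0
          + t ^ (q + 1) • vec4 (v (1,1)) 0 0 0 := by
  funext x
  have h1 : (1 : F) ^ q = 1 := one_pow q
  have h0 : (0 : F) ^ q = 0 := zero_pow hq
  rcases x with ⟨a, b⟩
  simp only [Pi.add_apply, Pi.smul_apply, smul_eq_mul]
  fin_cases a <;> fin_cases b <;>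
    simp [kron_mulVec, vec4, Matrix.map_apply, h1, h0, pow_succ] <;> ring

private lemma lower_sum {F : Type*} [Field F] (q : ℕ) (hq : q ≠ 0) (t : F)
    (v : Fin 2 × Fin 2 → F) :
    (Matrix.kroneckerMap (· * ·) !![1, 0; t, 1] ((!![1, 0; t, 1]).map fun x => x ^ q)).mulVec v
      = v + t ^ 1 • vec4 0 0 (v (0,0)) (v (0,1)) + t ^ q • vec4 0 (v (0,0)) 0 (v (1,0))
          + t ^ (q + 1) • vec4 0 0 0 (v (0,0)) := by
  funext x
  have h1 : (1 : F) ^ q = 1 := one_pow q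
  have h0 : (0 : F) ^ q = 0 := zero_pow hq
  rcases x with ⟨a, b⟩
  simp only [Pi.add_apply, Pi.smul_apply, smul_eq_mul]
  fin_cases a <;> fin_cases b <;>
    simp [kron_mulVec, vec4, Matrix.map_apply, h1, h0, pow_succ] <;> ring

private lemma extract4 {F : Type*} [Field F] {V : Type*} [AddCommGroup V] [Module F V]
    (K : Subfield F) [Finite K] (e : Fin 4 → ℕ) (he : Function.Injective e)
    (hlt : ∀ k, e k < Nat.card K) (W : Submodule F V) (c : Fin 4 → V)
    (h : ∀ t ∈ K, (∑ k, t ^ (e k) • c k) ∈ W) : ∀ k, c k ∈ W := by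
  classical
  have hfin : (K : Set F).Finite := Set.toFinite _
  have hcard : hfin.toFinset.card = Nat.card K := by
    rw [← Set.ncard_eq_toFinset_card _ hfin, ← Nat.card_coe_set_eq]
    rfl
  have hpos : 0 < Nat.card K := Nat.pos_of_ne_zero (fun h0 => by simpa [h0] using hlt 0)
  have hsingle : ∀ x : Fin 4, (fun j => if x = j then (1:F) else 0) = Pi.single x 1 := by
    intro x; funext j; simp [Pi.single_apply, eq_comm]
  have hspan : Submodule.span F {w : Fin 4 → F | ∃ t ∈ K, w = fun k => t ^ e k} = ⊤ := by
    by_contra hS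
    obtain ⟨f, hf0, hker⟩ :=
      Submodule.exists_dual_map_eq_bot_of_lt_top (lt_top_iff_ne_top.mpr hS) inferInstance
    set P : F[X] := ∑ k, C (f (Pi.single k 1)) * X ^ e k with hP
    have hfv : ∀ w : Fin 4 → F, f w = ∑ k, w k * f (Pi.single k 1) := by
      intro w
      conv_lhs => rw [pi_eq_sum_univ w]
      rw [map_sum]
      refine Finset.sum_congr rfl fun x _ => ?_
      rw [_root_.map_smul, hsingle, smul_eq_mul]
    have hev : ∀ t ∈ hfin.toFinset, P.eval t = 0 := by
      intro t ht
      rw [Set.Finite.mem_toFinset] at ht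
      have hw : (fun k => t ^ e k) ∈ Submodule.span F
          {w : Fin 4 → F | ∃ t ∈ K, w = fun k => t ^ e k} :=
        Submodule.subset_span ⟨t, ht, rfl⟩
      have hz : f (fun k => t ^ e k) = 0 := by
        have := Submodule.mem_map_of_mem (f := f) hw
        rw [hker] at this
        exact (Submodule.mem_bot F).mp this
      rw [hfv] at hz
      rw [hP, Polynomial.eval_finset_sum]
      simp only [eval_mul, eval_C, eval_pow, eval_X]
      rw [← hz]
      exact Finset.sum_congr rfl fun k _ => mul_comm _ _
    have hdeg : P.natDegree < hfin.toFinset.card := by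
      rw [hcard]
      have hb : P.natDegree ≤ Nat.card K - 1 := by
        apply Polynomial.natDegree_sum_le_of_forall_le
        intro k _
        exact le_trans (Polynomial.natDegree_C_mul_X_pow_le _ _) (Nat.le_pred_of_lt (hlt k))
      omega
    have hP0 : P = 0 := Polynomial.eq_zero_of_natDegree_lt_card_of_eval_eq_zero' P _ hev hdeg
    apply hf0
    have hcoeff : ∀ k, f (Pi.single k 1) = 0 := by
      intro k
      have := congrArg (fun Q => Polynomial.coeff Q (e k)) hP0
      simp only [hP, Polynomial.finset_sum_coeff, Polynomial.coeff_C_mul,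
        Polynomial.coeff_X_pow, Polynomial.coeff_zero] at this
      rw [Finset.sum_eq_single k] at this
      · simpa using this
      · intro j _ hj
        have hne : e k ≠ e j := fun hc => hj (he hc.symm)
        simp [hne]
      · simp
    refine LinearMap.ext fun w => ?_
    rw [hfv w]
    simp [hcoeff]
  set Φ : (Fin 4 → F) →ₗ[F] V :=
    ∑ k, LinearMap.smulRight (LinearMap.proj k) (c k) with hΦ
  have hΦa : ∀ a : Fin 4 → F, Φ a = ∑ k, a k • c k := by
    intro a; simp [hΦ]
  have hle : Submodule.span F {w : Fin 4 → F | ∃ t ∈ K, w = fun k => t ^ e k} ≤ W.comap Φ := by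
    rw [Submodule.span_le]
    rintro w ⟨t, ht, rfl⟩
    simpa [hΦa] using h t ht
  rw [hspan, top_le_iff] at hle
  intro k
  have hmem : Pi.single k 1 ∈ W.comap Φ := by rw [hle]; trivial
  have := Submodule.mem_comap.mp hmem
  simpa [hΦa, Pi.single_apply] using this

private lemma mem_of_smul_mem {F : Type*} [Field F] {V : Type*} [AddCommGroup V] [Module F V]
    {W : Submodule F V} {s : F} (hs : s ≠ 0) {w : V} (h : s • w ∈ W) : w ∈ W := by
  simpa [smul_smul, inv_mul_cancel₀ hs] using W.smul_mem s⁻¹ h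

end Helpers

/-- Let `F` be an algebraically closed field of characteristic `p > 0`, `i ≥ 1`,
and for a `2×2` matrix `g` over `F` let `ρ(g) = g ⊗ g^{[p^i]}`, the Kronecker
product of `g` with its entrywise `p^i`-th power, acting on `F⁴`.  Then:
(1) if `K` is a finite subfield of `F` with `p^{2i}` elements, the only
subspaces of `F⁴` invariant under `ρ(g)` for all `g ∈ SL₂(K)` are `0` and `F⁴`;
(2) if `K'` is a finite subfield of `F` with `p^i` elements, there is a proper
nonzero subspace of `F⁴` invariant under `ρ(g)` for all `g ∈ SL₂(K')`. -/
theorem stmt16 {p : ℕ} (hp : p.Prime) (i : ℕ) (hi : 1 ≤ i)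
    (F : Type*) [Field F] [IsAlgClosed F] [CharP F p] :
    (∀ K : Subfield F, Nat.card K = p ^ (2 * i) →
      ∀ W : Submodule F (Fin 2 × Fin 2 → F),
        (∀ g : Matrix (Fin 2) (Fin 2) F, (∀ a b, g a b ∈ K) → g.det = 1 →
          ∀ w ∈ W,
            (Matrix.kroneckerMap (· * ·) g (g.map fun x => x ^ p ^ i)).mulVec w ∈ W) →
        W = ⊥ ∨ W = ⊤) ∧
    (∀ K' : Subfield F, Nat.card K' = p ^ i →
      ∃ W : Submodule F (Fin 2 × Fin 2 → F), W ≠ ⊥ ∧ W ≠ ⊤ ∧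
        (∀ g : Matrix (Fin 2) (Fin 2) F, (∀ a b, g a b ∈ K') → g.det = 1 →
          ∀ w ∈ W,
            (Matrix.kroneckerMap (· * ·) g (g.map fun x => x ^ p ^ i)).mulVec w ∈ W)) := by
  classical
  set q := p ^ i with hqdef
  have hq2 : 2 ≤ q := le_trans hp.two_le (Nat.le_self_pow (by omega) p)
  have hqne : q ≠ 0 := by omega
  constructor
  · -- Part 1: irreducibility over K with p^(2i) elements
    intro K hK W hW
    by_cases hbot : W = ⊥
    · exact Or.inl hbot
    right
    have hfinK : Finite K := Nat.finite_of_card_ne_zero (by rw [hK]; exact pow_ne_zero _ hp.pos.ne')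
    have hcardK : Nat.card K = q ^ 2 := by
      rw [hK, hqdef, ← pow_mul, Nat.mul_comm]
    have he_inj : Function.Injective ![0, 1, q, q + 1] := by
      intro a b hab
      fin_cases a <;> fin_cases b <;> simp at hab ⊢ <;> omega
    have he_lt : ∀ k, ![0, 1, q, q + 1] k < Nat.card K := by
      intro k
      rw [hcardK]
      fin_cases k <;> simp <;> nlinarith
    -- upper unipotents
    have upperW : ∀ v ∈ W, vec4 (v (1,0)) (v (1,1)) 0 0 ∈ W ∧
        vec4 (v (0,1)) 0 (v (1,1)) 0 ∈ W ∧ vec4 (v (1,1)) 0 0 0 ∈ W := by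
      intro v hv
      have hext := extract4 K ![0, 1, q, q + 1] he_inj he_lt W
        ![v, vec4 (v (1,0)) (v (1,1)) 0 0, vec4 (v (0,1)) 0 (v (1,1)) 0, vec4 (v (1,1)) 0 0 0]
        (fun t ht => by
          have hm := hW !![1, t; 0, 1]
            (by intro a b; fin_cases a <;> fin_cases b <;>
                  simp [K.zero_mem, K.one_mem, ht])
            (by simp [Matrix.det_fin_two_of]) v hv
          rw [upper_sum q hqne t v] at hm
          rw [sum4]
          simpa using hm)
      exact ⟨hext 1, hext 2, hext 3⟩
    -- lower unipotents
    have lowerW : ∀ v ∈ W, vec4 0 0 (v (0,0)) (v (0,1)) ∈ W ∧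
        vec4 0 (v (0,0)) 0 (v (1,0)) ∈ W ∧ vec4 0 0 0 (v (0,0)) ∈ W := by
      intro v hv
      have hext := extract4 K ![0, 1, q, q + 1] he_inj he_lt W
        ![v, vec4 0 0 (v (0,0)) (v (0,1)), vec4 0 (v (0,0)) 0 (v (1,0)), vec4 0 0 0 (v (0,0))]
        (fun t ht => by
          have hm := hW !![1, 0; t, 1]
            (by intro a b; fin_cases a <;> fin_cases b <;>
                  simp [K.zero_mem, K.one_mem, ht])
            (by simp [Matrix.det_fin_two_of]) v hv
          rw [lower_sum q hqne t v] at hm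
          rw [sum4]
          simpa using hm)
      exact ⟨hext 1, hext 2, hext 3⟩
    obtain ⟨v, hvW, hv0⟩ := Submodule.exists_mem_ne_zero_of_ne_bot hbot
    obtain ⟨hA1, hA2, hA3⟩ := upperW v hvW
    -- the vector e00 is in W
    have he00 : vec4 (1:F) 0 0 0 ∈ W := by
      by_cases h11 : v (1,1) ≠ 0
      · refine mem_of_smul_mem h11 ?_
        have heq : vec4 (v (1,1)) 0 0 0 = v (1,1) • vec4 (1:F) 0 0 0 := by
          funext x; rcases x with ⟨a, b⟩
          fin_cases a <;> fin_cases b <;> simp [vec4]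
        rw [← heq]; exact hA3
      push_neg at h11
      by_cases h10 : v (1,0) ≠ 0
      · refine mem_of_smul_mem h10 ?_
        have heq : vec4 (v (1,0)) (v (1,1)) 0 0 = v (1,0) • vec4 (1:F) 0 0 0 := by
          funext x; rcases x with ⟨a, b⟩
          fin_cases a <;> fin_cases b <;> simp [vec4, h11]
        rw [← heq]; exact hA1
      push_neg at h10
      by_cases h01 : v (0,1) ≠ 0
      · refine mem_of_smul_mem h01 ?_
        have heq : vec4 (v (0,1)) 0 (v (1,1)) 0 = v (0,1) • vec4 (1:F) 0 0 0 := by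
          funext x; rcases x with ⟨a, b⟩
          fin_cases a <;> fin_cases b <;> simp [vec4, h11]
        rw [← heq]; exact hA2
      push_neg at h01
      have h00 : v (0,0) ≠ 0 := by
        intro h00
        apply hv0
        funext x; rcases x with ⟨a, b⟩
        fin_cases a <;> fin_cases b <;> assumption
      refine mem_of_smul_mem h00 ?_
      have heq : v = v (0,0) • vec4 (1:F) 0 0 0 := by
        funext x; rcases x with ⟨a, b⟩
        fin_cases a <;> fin_cases b <;> simp [vec4, h11, h10, h01]
      rw [← heq]; exact hvW
    -- evaluations of e00
    have hv00 : (vec4 (1:F) 0 0 0) (0,0) = 1 := by simp [vec4]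
    have hv01 : (vec4 (1:F) 0 0 0) (0,1) = 0 := by simp [vec4]
    have hv10 : (vec4 (1:F) 0 0 0) (1,0) = 0 := by simp [vec4]
    obtain ⟨hB1, hB2, hB3⟩ := lowerW _ he00
    -- so all four basis vectors are in W
    rw [eq_top_iff]
    rintro x -
    have hxdec : x = x (0,0) • vec4 (1:F) 0 0 0 + x (0,1) • vec4 (0:F) 1 0 0 +
        x (1,0) • vec4 (0:F) 0 1 0 + x (1,1) • vec4 (0:F) 0 0 1 := by
      funext y; rcases y with ⟨a, b⟩
      fin_cases a <;> fin_cases b <;> simp [vec4]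
    have he01 : vec4 (0:F) 1 0 0 ∈ W := by
      rw [hv00, hv10] at hB2; exact hB2
    have he10 : vec4 (0:F) 0 1 0 ∈ W := by
      rw [hv00, hv01] at hB1; exact hB1
    have he11 : vec4 (0:F) 0 0 1 ∈ W := by
      rw [hv00] at hB3; exact hB3
    rw [hxdec]
    exact W.add_mem (W.add_mem (W.add_mem (W.smul_mem _ he00) (W.smul_mem _ he01))
      (W.smul_mem _ he10)) (W.smul_mem _ he11)
  · -- Part 2: reducibility over K' with p^i elements
    intro K' hK'
    have hfinK' : Finite K' := Nat.finite_of_card_ne_zero (by rw [hK']; exact pow_ne_zero _ hp.pos.ne')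
    have : Fintype K' := Fintype.ofFinite _
    have hpowK' : ∀ x : K', x ^ q = x := by
      intro x
      have := FiniteField.pow_card x
      rwa [← Nat.card_eq_fintype_card, hK'] at this
    set w0 : Fin 2 × Fin 2 → F := vec4 0 1 (-1) 0 with hw0
    refine ⟨Submodule.span F {w0}, ?_, ?_, ?_⟩
    · rw [Ne, Submodule.span_singleton_eq_bot]
      intro h
      have := congrFun h (0,1)
      simp [hw0, vec4] at this
    · intro h
      have hmem : vec4 (1:F) 0 0 0 ∈ Submodule.span F {w0} := by rw [h]; trivial
      rw [Submodule.mem_span_singleton] at hmem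
      obtain ⟨a, ha⟩ := hmem
      have := congrFun ha (0,0)
      simp [hw0, vec4] at this
    · intro g hg hdet w hw
      have hmap : (g.map fun x => x ^ q) = g := by
        funext a b
        have hx := hpowK' ⟨g a b, hg a b⟩
        have : (g a b) ^ q = g a b := by
          have := congrArg (Subtype.val) hx
          simpa using this
        simp [Matrix.map_apply, this]
      rw [hmap]
      rw [Submodule.mem_span_singleton] at hw
      obtain ⟨a, rfl⟩ := hw
      rw [Matrix.mulVec_smul]
      apply Submodule.smul_mem
      have hfix : (Matrix.kroneckerMap (· * ·) g g).mulVec w0 = w0 := by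
        rw [Matrix.det_fin_two] at hdet
        have h00 : w0 (0,0) = 0 := rfl
        have h01 : w0 (0,1) = 1 := rfl
        have h10 : w0 (1,0) = -1 := rfl
        have h11 : w0 (1,1) = 0 := rfl
        funext x; rcases x with ⟨a', b'⟩
        fin_cases a' <;> fin_cases b' <;>
          rw [kron_mulVec] <;> simp only [Fin.mk_zero, Fin.mk_one, h00, h01, h10, h11] <;>
          [linear_combination; linear_combination hdet; linear_combination -hdet;
            linear_combination]
      rw [hfix]
      exact Submodule.mem_span_singleton_self w0
end

section
/- Let p be a prime, n ≥ 2 an integer, and N = 1 + p + p² + ⋯ + pⁿ. Let i, j, k, l be integers with 0 ≤ i, j, k, l ≤ n and (i, j) ≠ (k, l). If N divides (p^i − p^{j+1}) − (p^k − p^{l+1}), then N divides p^i − p^{j+1} and N divides p^k − p^{l+1}; equivalently, both i = j + 1 or (i, j) = (0, n), and k = l + 1 or (k, l) = (0, n). -/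
private lemma pow4_ne {p : ℕ} (hp : 2 ≤ p) {a b c d : ℕ} (hab : a ≤ b) (hcd : c ≤ d)
    (hac : a < c) : p ^ a + p ^ b ≠ p ^ c + p ^ d := by
  intro h
  rcases eq_or_lt_of_le hab with rfl | hab'
  · have h1 : p * p ^ a ≤ p ^ c := by
      calc p * p ^ a = p ^ (a + 1) := by ring
      _ ≤ p ^ c := Nat.pow_le_pow_right (by omega) hac
    have h2 : p * p ^ a ≤ p ^ d := le_trans h1 (Nat.pow_le_pow_right (by omega) hcd)
    have h3 : 0 < p ^ a := pow_pos (by omega) a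
    nlinarith
  · have hd1 : p ^ (a + 1) ∣ p ^ b := pow_dvd_pow p hab'
    have hd2 : p ^ (a + 1) ∣ p ^ a + p ^ b := by
      rw [h]
      exact dvd_add (pow_dvd_pow p hac) (pow_dvd_pow p (lt_of_lt_of_le hac hcd))
    have hd3 : p ^ (a + 1) ∣ p ^ a := (Nat.dvd_add_right hd1).mp
      (by rwa [add_comm (p ^ a) (p ^ b)] at hd2)
    have h4 := Nat.le_of_dvd (pow_pos (by omega) a) hd3
    have h5 : p ^ a < p ^ (a + 1) := Nat.pow_lt_pow_right (by omega) (by omega)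
    omega

private lemma pow4_sorted {p : ℕ} (hp : 2 ≤ p) {a b c d : ℕ} (hab : a ≤ b) (hcd : c ≤ d)
    (h : p ^ a + p ^ b = p ^ c + p ^ d) : a = c ∧ b = d := by
  rcases lt_trichotomy a c with hac | rfl | hca
  · exact absurd h (pow4_ne hp hab hcd hac)
  · have hbd : p ^ b = p ^ d := by omega
    exact ⟨rfl, Nat.pow_right_injective hp hbd⟩
  · exact absurd h.symm (pow4_ne hp hcd hab hca)

private lemma pow4 {p : ℕ} (hp : 2 ≤ p) {a b c d : ℕ}
    (h : p ^ a + p ^ b = p ^ c + p ^ d) : (a = c ∧ b = d) ∨ (a = d ∧ b = c) := by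
  rcases le_total a b with hab | hba <;> rcases le_total c d with hcd | hdc
  · exact Or.inl (pow4_sorted hp hab hcd h)
  · exact Or.inr (pow4_sorted hp hab hdc (by omega))
  · have := pow4_sorted hp hba hcd (by omega)
    exact Or.inr ⟨this.2, this.1⟩
  · have := pow4_sorted hp hba hdc (by omega)
    exact Or.inl ⟨this.2, this.1⟩

private lemma geomNat (q : ℕ) : ∀ nn : ℕ,
    (q + 1) * (∑ t ∈ Finset.range nn, (q + 2) ^ t) + 1 = (q + 2) ^ nn := by
  intro nn
  induction nn with
  | zero => simp
  | succ nn ih =>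
    rw [Finset.sum_range_succ]
    calc (q + 1) * ((∑ t ∈ Finset.range nn, (q + 2) ^ t) + (q + 2) ^ nn) + 1
        = ((q + 1) * (∑ t ∈ Finset.range nn, (q + 2) ^ t) + 1) + (q + 1) * (q + 2) ^ nn := by
          ring
      _ = (q + 2) ^ nn + (q + 1) * (q + 2) ^ nn := by rw [ih]
      _ = (q + 2) ^ (nn + 1) := by rw [pow_succ]; ring

private lemma noN {p n : ℕ} (hp : p.Prime) (hn : 2 ≤ n) {a b c d : ℕ}
    (ha : a ≤ n) (hd : d ≤ n) :
    p ^ a + p ^ d ≠ (∑ t ∈ Finset.range (n + 1), p ^ t) + p ^ b + p ^ c := by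
  intro hE
  obtain ⟨q, rfl⟩ : ∃ q, p = q + 2 := ⟨p - 2, by have := hp.two_le; omega⟩
  set p := q + 2 with hpdef
  set S := ∑ t ∈ Finset.range n, p ^ t with hS
  have hNS : (∑ t ∈ Finset.range (n + 1), p ^ t) = S + p ^ n := Finset.sum_range_succ _ _
  rw [hNS] at hE
  obtain ⟨m, hm⟩ : ∃ m, n = m + 1 := ⟨n - 1, by omega⟩
  set T := ∑ t ∈ Finset.range m, p ^ t with hTdef
  have hT : S = p * T + 1 := by
    rw [hS, hm, Finset.sum_range_succ', hTdef, Finset.mul_sum]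
    simp [pow_succ, mul_comm]
  have hT1 : 1 ≤ T := by
    rw [hTdef]
    calc 1 = p ^ 0 := (pow_zero p).symm
    _ ≤ ∑ t ∈ Finset.range m, p ^ t :=
      Finset.single_le_sum (f := fun t => p ^ t) (fun t _ => Nat.zero_le _)
        (Finset.mem_range.mpr (by omega))
  have hgeo : (q + 1) * S + 1 = p ^ n := by rw [hS]; exact geomNat q n
  -- both a and d equal n
  have hpa : p ^ a ≤ p ^ n := Nat.pow_le_pow_right (by omega) ha
  have hpd : p ^ d ≤ p ^ n := Nat.pow_le_pow_right (by omega) hd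
  have hb1 : 1 ≤ p ^ b := Nat.one_le_pow _ _ (by omega)
  have hc1 : 1 ≤ p ^ c := Nat.one_le_pow _ _ (by omega)
  have hSn : p ^ (n - 1) ≤ S := by
    rw [hS]
    exact Finset.single_le_sum (f := fun t => p ^ t) (fun t _ => Nat.zero_le _)
      (Finset.mem_range.mpr (by omega))
  have h2pow : 2 * p ^ (n - 1) ≤ p ^ n := by
    calc 2 * p ^ (n - 1) ≤ p * p ^ (n - 1) := Nat.mul_le_mul_right _ (by omega)
    _ = p ^ (n - 1 + 1) := by ring
    _ = p ^ n := by congr 1; omega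
  have key : ∀ x : ℕ, x ≤ n → p ^ x ≠ p ^ n → p ^ x ≤ p ^ (n - 1) := by
    intro x hx hxne
    have hx' : x ≤ n - 1 := by
      rcases Nat.lt_or_ge x n with h | h
      · omega
      · exact absurd (by rw [show x = n by omega]) hxne
    exact Nat.pow_le_pow_right (by omega) hx'
  have han : p ^ a = p ^ n := by
    by_contra hax
    have h1 : p ^ a ≤ p ^ (n - 1) := key a ha hax
    omega
  have hdn : p ^ d = p ^ n := by
    by_contra hdx
    have h1 : p ^ d ≤ p ^ (n - 1) := key d hd hdx
    omega
  have hE2 : p ^ n = S + p ^ b + p ^ c := by omega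
  have hE3 : p ^ b + p ^ c = q * S + 1 := by
    have hmul : (q + 1) * S = q * S + S := by ring
    linarith
  -- final contradiction
  rcases Nat.eq_zero_or_pos q with rfl | hq1
  · simp only [Nat.zero_mul, Nat.zero_add] at hE3
    omega
  · rcases Nat.eq_zero_or_pos b with rfl | hb
    · rcases Nat.eq_zero_or_pos c with rfl | hc
      · -- b = c = 0
        have hqS : q * S = 1 := by
          simp only [pow_zero] at hE3
          linarith
        nlinarith [hT, hT1, hq1, hqS]
      · -- b = 0, c ≥ 1
        obtain ⟨C, hC⟩ : p ∣ p ^ c := dvd_pow_self p (by omega)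
        have hmod : (p ^ 0 + p ^ c) % p = (q + 1) % p := by
          have hrw : q * S + 1 = q + 1 + p * (q * T) := by rw [hT]; ring
          rw [hE3, hrw, Nat.add_mul_mod_self_left]
        rw [pow_zero, hC, Nat.add_mul_mod_self_left,
          Nat.mod_eq_of_lt (show (1 : ℕ) < p by omega),
          Nat.mod_eq_of_lt (show q + 1 < p by omega)] at hmod
        omega
    · -- b ≥ 1
      obtain ⟨B, hB⟩ : p ∣ p ^ b := dvd_pow_self p (by omega)
      have hmod : (p ^ b + p ^ c) % p = (q + 1) % p := by
        have hrw : q * S + 1 = q + 1 + p * (q * T) := by rw [hT]; ring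
        rw [hE3, hrw, Nat.add_mul_mod_self_left]
      rw [Nat.mod_eq_of_lt (show q + 1 < p by omega)] at hmod
      rcases Nat.eq_zero_or_pos c with rfl | hc
      · rw [pow_zero, add_comm, hB, Nat.add_mul_mod_self_left,
          Nat.mod_eq_of_lt (show (1 : ℕ) < p by omega)] at hmod
        omega
      · obtain ⟨C, hC⟩ : p ∣ p ^ c := dvd_pow_self p (by omega)
        rw [hB, hC, ← Nat.mul_add, Nat.mul_mod_right] at hmod
        omega



/-- Let `p` be a prime, `n ≥ 2`, `N = 1 + p + ⋯ + pⁿ`, and `0 ≤ i, j, k, l ≤ n`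
with `(i, j) ≠ (k, l)`.  If `N` divides `(p^i - p^{j+1}) - (p^k - p^{l+1})`,
then `N` divides `p^i - p^{j+1}` and `N` divides `p^k - p^{l+1}`;
equivalently, both `i = j + 1` or `(i, j) = (0, n)`, and `k = l + 1` or
`(k, l) = (0, n)`. -/
theorem stmt18 {p : ℕ} (hp : p.Prime) {n : ℕ} (hn : 2 ≤ n)
    (N : ℕ) (hN : N = ∑ t ∈ Finset.range (n + 1), p ^ t)
    (i j k l : ℕ) (hi : i ≤ n) (hj : j ≤ n) (hk : k ≤ n) (hl : l ≤ n)
    (hne : ¬ (i = k ∧ j = l))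
    (hdvd : (N : ℤ) ∣ (((p : ℤ) ^ i - (p : ℤ) ^ (j + 1)) -
      ((p : ℤ) ^ k - (p : ℤ) ^ (l + 1)))) :
    ((N : ℤ) ∣ ((p : ℤ) ^ i - (p : ℤ) ^ (j + 1)) ∧
      (N : ℤ) ∣ ((p : ℤ) ^ k - (p : ℤ) ^ (l + 1))) ∧
    ((i = j + 1 ∨ (i = 0 ∧ j = n)) ∧ (k = l + 1 ∨ (k = 0 ∧ l = n))) := by
  have hp2 := hp.two_le
  have hp1 : (1 : ℤ) ≤ (p : ℤ) := by exact_mod_cast Nat.one_le_of_lt hp2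
  -- N ∣ p^(n+1) - 1
  have hNd : (N : ℤ) ∣ (p : ℤ) ^ (n + 1) - 1 := by
    refine ⟨(p : ℤ) - 1, ?_⟩
    have hg := geom_sum_mul ((p : ℤ)) (n + 1)
    rw [← hg, hN]
    push_cast
    ring
  set j' := if j = n then 0 else j + 1 with hj'
  set l' := if l = n then 0 else l + 1 with hl'
  have hj'n : j' ≤ n := by rw [hj']; split <;> omega
  have hl'n : l' ≤ n := by rw [hl']; split <;> omega
  have hjd : (N : ℤ) ∣ (p : ℤ) ^ (j + 1) - (p : ℤ) ^ j' := by
    rw [hj']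
    split
    · next h => rw [h]; simpa using hNd
    · simp
  have hld : (N : ℤ) ∣ (p : ℤ) ^ (l + 1) - (p : ℤ) ^ l' := by
    rw [hl']
    split
    · next h => rw [h]; simpa using hNd
    · simp
  have hdvd2 : (N : ℤ) ∣ (((p : ℤ) ^ i + (p : ℤ) ^ l') - ((p : ℤ) ^ j' + (p : ℤ) ^ k)) := by
    have h1 := dvd_sub (dvd_add hdvd hjd) hld
    have h2 : ((p : ℤ) ^ i - (p : ℤ) ^ (j + 1) - ((p : ℤ) ^ k - (p : ℤ) ^ (l + 1)) +
        ((p : ℤ) ^ (j + 1) - (p : ℤ) ^ j') - ((p : ℤ) ^ (l + 1) - (p : ℤ) ^ l'))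
        = (((p : ℤ) ^ i + (p : ℤ) ^ l') - ((p : ℤ) ^ j' + (p : ℤ) ^ k)) := by ring
    rwa [h2] at h1
  -- size bounds
  have hpnN : p ^ n < N := by
    rw [hN, Finset.sum_range_succ]
    have h0 : 0 < ∑ t ∈ Finset.range n, p ^ t :=
      Finset.sum_pos (fun t _ => pow_pos (by omega) t) (by simp; omega)
    omega
  have hbound : ∀ x : ℕ, x ≤ n → (p : ℤ) ^ x < (N : ℤ) := by
    intro x hx
    have h1 : p ^ x ≤ p ^ n := Nat.pow_le_pow_right (by omega) hx
    exact_mod_cast lt_of_le_of_lt (Nat.cast_le.mpr h1) (Nat.cast_lt.mpr hpnN)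
  have hNpos : (0 : ℤ) < N := by
    have : 0 < p ^ n := pow_pos (by omega) n
    exact_mod_cast by omega
  have hbi := hbound i hi
  have hbl := hbound l' hl'n
  have hbj := hbound j' hj'n
  have hbk := hbound k hk
  have hposj : (0 : ℤ) < (p : ℤ) ^ j' := pow_pos (by omega) j'
  have hposk : (0 : ℤ) < (p : ℤ) ^ k := pow_pos (by omega) k
  have hposi : (0 : ℤ) < (p : ℤ) ^ i := pow_pos (by omega) i
  have hposl : (0 : ℤ) < (p : ℤ) ^ l' := pow_pos (by omega) l'
  obtain ⟨m, hm⟩ := hdvd2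
  have hm3 : m = -1 ∨ m = 0 ∨ m = 1 := by
    rcases lt_trichotomy m 0 with h | h | h
    · left
      by_contra hmm
      have h2 : m ≤ -2 := by omega
      nlinarith
    · right; left; exact h
    · right; right
      by_contra hmm
      have h2 : 2 ≤ m := by omega
      nlinarith
  -- helper to convert j'/l' info back
  have hjback : ∀ x : ℕ, x = j' → (x = j + 1 ∨ (x = 0 ∧ j = n)) := by
    intro x hx
    rw [hj'] at hx
    split at hx
    · next h => exact Or.inr ⟨hx, h⟩
    · exact Or.inl hx
  have hlback : ∀ x : ℕ, x = l' → (x = l + 1 ∨ (x = 0 ∧ l = n)) := by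
    intro x hx
    rw [hl'] at hx
    split at hx
    · next h => exact Or.inr ⟨hx, h⟩
    · exact Or.inl hx
  rcases hm3 with rfl | rfl | rfl
  · -- D = -N : p^j' + p^k = N + p^i + p^l'
    exfalso
    have hnat : p ^ j' + p ^ k = (∑ t ∈ Finset.range (n + 1), p ^ t) + p ^ i + p ^ l' := by
      have hz : ((p ^ j' + p ^ k : ℕ) : ℤ)
          = (((∑ t ∈ Finset.range (n + 1), p ^ t) + p ^ i + p ^ l' : ℕ) : ℤ) := by
        rw [← hN]
        push_cast
        linarith [hm]
      exact_mod_cast hz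
    exact noN hp hn hj'n hk hnat
  · -- D = 0
    have hnat : p ^ i + p ^ l' = p ^ j' + p ^ k := by
      have hz : ((p ^ i + p ^ l' : ℕ) : ℤ) = ((p ^ j' + p ^ k : ℕ) : ℤ) := by
        push_cast
        linarith [hm]
      exact_mod_cast hz
    rcases pow4 hp2 hnat with ⟨hij, hlk⟩ | ⟨hik, hlj⟩
    · -- i = j' and l' = k
      have h1 : i = j + 1 ∨ (i = 0 ∧ j = n) := hjback i hij
      have h2 : k = l + 1 ∨ (k = 0 ∧ l = n) := hlback k hlk.symm
      have d1 : (N : ℤ) ∣ (p : ℤ) ^ i - (p : ℤ) ^ (j + 1) := by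
        rcases h1 with h | ⟨h0, hjn⟩
        · rw [h]; simp
        · rw [h0, hjn]
          have : (p : ℤ) ^ 0 - (p : ℤ) ^ (n + 1) = -((p : ℤ) ^ (n + 1) - 1) := by ring
          rw [this]
          exact hNd.neg_right
      have d2 : (N : ℤ) ∣ (p : ℤ) ^ k - (p : ℤ) ^ (l + 1) := by
        rcases h2 with h | ⟨h0, hln⟩
        · rw [h]; simp
        · rw [h0, hln]
          have : (p : ℤ) ^ 0 - (p : ℤ) ^ (n + 1) = -((p : ℤ) ^ (n + 1) - 1) := by ring
          rw [this]
          exact hNd.neg_right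
      exact ⟨⟨d1, d2⟩, h1, h2⟩
    · -- i = k and l' = j' → j = l, contradiction
      exfalso
      have hjl : j = l := by
        rw [hj', hl'] at hlj
        split_ifs at hlj <;> omega
      exact hne ⟨hik, hjl⟩
  · -- D = N : p^i + p^l' = N + p^j' + p^k
    exfalso
    have hnat : p ^ i + p ^ l' = (∑ t ∈ Finset.range (n + 1), p ^ t) + p ^ j' + p ^ k := by
      have hz : ((p ^ i + p ^ l' : ℕ) : ℤ)
          = (((∑ t ∈ Finset.range (n + 1), p ^ t) + p ^ j' + p ^ k : ℕ) : ℤ) := by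
        rw [← hN]
        push_cast
        linarith [hm]
      exact_mod_cast hz
    exact noN hp hn hi hl'n hnat
end

section
/- Let F be a field, n ≥ 1 an integer, a ≥ 2 an integer, and a₁, …, a_{n+1} pairwise distinct nonzero elements of F. For a vector d = (d₁,…,d_{n+1}) of nonnegative integers with d₁ + ⋯ + d_{n+1} = a, set e_d = ∏_{t=1}^{n+1} a_t^{d_t}. If the family (e_d), indexed by all such vectors d, is almost cyclic, then for every integer b with 1 ≤ b < a the products ∏_{t=1}^{n+1} a_t^{d_t}, indexed by the vectors of nonnegative integers with coordinate sum b, are pairwise distinct. -/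
lemma prod_pow_add_single {F : Type*} [Field F] {n : ℕ} (a : Fin (n + 1) → F)
    (u : Fin (n + 1) → ℕ) (s : Fin (n + 1)) (e : ℕ) :
    (∏ t, a t ^ (u t + (if t = s then e else 0))) = (∏ t, a t ^ u t) * a s ^ e := by
  simp only [pow_add, Finset.prod_mul_distrib]
  congr 1
  rw [Finset.prod_eq_single s]
  · simp
  · intro b _ hb; simp [hb]
  · simp

/-- Let `a₁,…,a_{n+1}` be pairwise distinct nonzero elements of a field `F`
and `A ≥ 2` an integer.  For a vector `d` of nonnegative integers with
`d₁ + ⋯ + d_{n+1} = A`, set `e_d = ∏ a_t^{d_t}`.  If the family `(e_d)` over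
all such vectors is almost cyclic, then for every `1 ≤ b < A` the monomials
`∏ a_t^{d_t}` over vectors with coordinate sum `b` are pairwise distinct. -/
theorem stmt19 {F : Type*} [Field F] {n : ℕ} (hn : 1 ≤ n)
    (A : ℕ) (hA : 2 ≤ A)
    (a : Fin (n + 1) → F) (ha0 : ∀ t, a t ≠ 0) (hinj : Function.Injective a)
    (hac : AlmostCyclic
      (fun v : {v : Fin (n + 1) → ℕ // ∑ t, v t = A} => ∏ t, a t ^ v.1 t)) :
    ∀ b : ℕ, 1 ≤ b → b < A →
      ∀ v w : Fin (n + 1) → ℕ, (∑ t, v t) = b → (∑ t, w t) = b →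
        (∏ t, a t ^ v t) = (∏ t, a t ^ w t) → v = w := by
  intro b hb1 hbA v w hv hw hprod
  by_contra hvw
  set c := A - b with hc
  have hc1 : 1 ≤ c := by omega
  have h01 : (0 : Fin (n + 1)) ≠ 1 := by
    simp [Fin.ext_iff, Fin.val_one', Nat.mod_eq_of_lt (by omega : 1 < n + 1)]
  -- the four extended vectors of degree A
  have sum_single : ∀ (u : Fin (n + 1) → ℕ) (s : Fin (n + 1)) (e m : ℕ),
      (∑ t, u t) = m → (∑ t, (u t + (if t = s then e else 0))) = m + e := by
    intro u s e m hu
    rw [Finset.sum_add_distrib, hu, Finset.sum_eq_single s]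
    · simp
    · intro t _ ht; simp [ht]
    · simp
  have sumA1 : ∀ u : Fin (n + 1) → ℕ, (∑ t, u t) = b →
      (∑ t, (u t + (if t = (0 : Fin (n+1)) then c else 0))) = A := by
    intro u hu; rw [sum_single u 0 c b hu]; omega
  have sumA2 : ∀ u : Fin (n + 1) → ℕ, (∑ t, u t) = b →
      (∑ t, ((fun t => u t + (if t = (0 : Fin (n+1)) then c-1 else 0)) t
        + (if t = (1 : Fin (n+1)) then 1 else 0))) = A := by
    intro u hu
    rw [sum_single _ 1 1 (b + (c-1)) (sum_single u 0 (c-1) b hu)]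
    omega
  set i : {v : Fin (n + 1) → ℕ // ∑ t, v t = A} :=
    ⟨fun t => v t + (if t = (0 : Fin (n+1)) then c else 0), sumA1 v hv⟩ with hi
  set j : {v : Fin (n + 1) → ℕ // ∑ t, v t = A} :=
    ⟨fun t => w t + (if t = (0 : Fin (n+1)) then c else 0), sumA1 w hw⟩ with hj
  set k : {v : Fin (n + 1) → ℕ // ∑ t, v t = A} :=
    ⟨fun t => (v t + (if t = (0 : Fin (n+1)) then c-1 else 0)) + (if t = (1 : Fin (n+1)) then 1 else 0),
      sumA2 v hv⟩ with hk
  set l : {v : Fin (n + 1) → ℕ // ∑ t, v t = A} :=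
    ⟨fun t => (w t + (if t = (0 : Fin (n+1)) then c-1 else 0)) + (if t = (1 : Fin (n+1)) then 1 else 0),
      sumA2 w hw⟩ with hl
  have hij : i ≠ j := by
    intro h
    apply hvw
    funext t
    have := congrFun (congrArg Subtype.val h) t
    simpa [hi, hj] using this
  have hkl : k ≠ l := by
    intro h
    apply hvw
    funext t
    have := congrFun (congrArg Subtype.val h) t
    simpa [hk, hl] using this
  have heij : (∏ t, a t ^ i.1 t) = ∏ t, a t ^ j.1 t := by
    rw [hi, hj]; simp only [prod_pow_add_single]; rw [hprod]
  have hekl : (∏ t, a t ^ k.1 t) = ∏ t, a t ^ l.1 t := by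
    rw [hk, hl]
    simp only [prod_pow_add_single a (fun t => v t + (if t = (0 : Fin (n+1)) then c-1 else 0)),
      prod_pow_add_single a (fun t => w t + (if t = (0 : Fin (n+1)) then c-1 else 0)),
      prod_pow_add_single]
    rw [hprod]
  have key := hac i j k l hij heij hkl hekl
  rw [hi, hk] at key
  simp only [prod_pow_add_single a (fun t => v t + (if t = (0 : Fin (n+1)) then c-1 else 0)),
    prod_pow_add_single] at key
  -- key : (∏ a^v) * a 0 ^ c = ((∏ a^v) * a 0 ^ (c-1)) * a 1 ^ 1
  have hP : (∏ t, a t ^ v t) ≠ 0 := by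
    refine Finset.prod_ne_zero_iff.2 fun t _ => pow_ne_zero _ (ha0 t)
  have hcc : c = (c - 1) + 1 := by omega
  rw [hcc, pow_succ, ← mul_assoc] at key
  have : a 0 = a 1 := by
    have h2 : (∏ t, a t ^ v t) * a 0 ^ (c-1) ≠ 0 :=
      mul_ne_zero hP (pow_ne_zero _ (ha0 0))
    simp only [pow_one] at key
    exact mul_left_cancel₀ h2 key
  exact h01 (hinj this)
end
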